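/- arXiv:1606.05601 — 5 statements merged into one kernel-verified Lean document; each statement's English description precedes it below -/
import Mathlib

section
/- Let A(t) = (a_{kj}(t)) be a K×K real matrix-valued function, continuous in t ∈ ℝ, with A(t+T) = A(t), which is cooperative and strongly irreducible. Suppose (λ, φ) and (λ′, φ′) are two pairs consisting of a real number and a continuously differentiable T-periodic function ℝ → ℝ^K with all components strictly positive and |φ(0)| = |φ′(0)| = 1, such that −φ′(t) + A(t)φ(t) = λφ(t) and −(φ′)′(t) + A(t)φ′(t) = λ′φ′(t) for all t. Then λ = λ′ and φ(t) = φ′(t) for all t ∈ ℝ. -/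
open Matrix

/-!
Suppose `λ' ≤ λ`. Scale `φ'` by `s = max φ/φ'`, so that `w = s φ' - φ ≥ 0` vanishes at some
point. Then `w' = (A - λ') w + (λ - λ') φ` with a nonnegative forcing term, and cooperativity
gives `w_k' ≥ -M w_k` in each component (`-M` a lower bound for the diagonal of `A - λ'`),
so a zero of `w_k` propagates backwards in time and, by periodicity, to all times. A component
vanishing identically forces the components it is coupled to through `A` to vanish as well,
so by strong irreducibility `w ≡ 0`. Then the forcing vanishes, i.e. `λ = λ'`, and `φ = s φ'`;
the normalization gives `s = 1`.
-/

variable {ι : Type*}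

def IsCooperative (A : ℝ → Matrix ι ι ℝ) : Prop :=
  ∀ t k j, k ≠ j → 0 ≤ A t k j

def IsStronglyIrreducible (A : ℝ → Matrix ι ι ℝ) : Prop :=
  ∀ S : Set ι, S.Nonempty → Sᶜ.Nonempty → ∀ t, ∃ k ∈ S, ∃ j ∈ Sᶜ, A t k j ≠ 0

theorem IsCooperative.sub_smul_one [DecidableEq ι] {A : ℝ → Matrix ι ι ℝ} (hA : IsCooperative A)
    (μ : ℝ) : IsCooperative fun t => A t - μ • 1 := fun t k j hkj => by
  simpa [one_apply_ne hkj] using hA t k j hkj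

theorem IsStronglyIrreducible.sub_smul_one [DecidableEq ι] {A : ℝ → Matrix ι ι ℝ}
    (hA : IsStronglyIrreducible A) (μ : ℝ) : IsStronglyIrreducible fun t => A t - μ • 1 := by
  intro S hS hSc t
  obtain ⟨k, hk, j, hj, hkj⟩ := hA S hS hSc t
  have hne : k ≠ j := fun h => hj (h ▸ hk)
  exact ⟨k, hk, j, hj, by simpa [one_apply_ne hne] using hkj⟩

variable [Fintype ι]

theorem Matrix.diag_mul_le_mulVec_apply {B : Matrix ι ι ℝ} (hB : ∀ k j, k ≠ j → 0 ≤ B k j)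
    {v : ι → ℝ} (hv : 0 ≤ v) (k : ι) : B k k * v k ≤ (B *ᵥ v) k := by
  classical
  rw [mulVec, dotProduct, ← Finset.add_sum_erase _ _ (Finset.mem_univ k)]
  exact le_add_of_nonneg_right <| Finset.sum_nonneg fun j hj =>
    mul_nonneg (hB k j (Finset.ne_of_mem_erase hj).symm) (hv j)

theorem Function.Periodic.exists_forall_apply_le [Nonempty ι] {f : ℝ → ι → ℝ} {T : ℝ}
    (hf : Function.Periodic f T) (hT : T ≠ 0) (hc : Continuous f) :
    ∃ t₀ k₀, ∀ t k, f t k ≤ f t₀ k₀ := by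
  have hmax (k : ι) : ∃ t₀, ∀ t, f t k ≤ f t₀ k := by
    have hfk : Function.Periodic (fun t => f t k) T := fun t => congrFun (hf t) k
    obtain ⟨_, ⟨t₀, rfl⟩, ht₀⟩ := (hfk.compact_of_continuous hT
      ((continuous_apply k).comp hc)).exists_isGreatest (Set.range_nonempty _)
    exact ⟨t₀, fun t => ht₀ ⟨t, rfl⟩⟩
  choose tm htm using hmax
  obtain ⟨k₀, hk₀⟩ := Finite.exists_max fun k => f (tm k) k
  exact ⟨tm k₀, k₀, fun t k => (htm k t).trans (hk₀ k)⟩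

section MaximumPrinciple

/-- Multiplying by `exp (M t)` makes `f` monotone, so it stays `0` before any of its zeros. -/
theorem eq_zero_of_le_of_neg_mul_le_deriv {f f' : ℝ → ℝ} {M t₁ t : ℝ} (hf : 0 ≤ f)
    (hderiv : ∀ t, HasDerivAt f (f' t) t) (hM : ∀ t, -M * f t ≤ f' t) (h₁ : f t₁ = 0)
    (ht : t ≤ t₁) : f t = 0 := by
  have hderiv' (x : ℝ) : HasDerivAt (fun t => f t * Real.exp (t * M))
      ((f' x + M * f x) * Real.exp (x * M)) x :=
    ((hderiv x).mul (hasDerivAt_mul_const M).exp).congr_deriv (by ring)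
  have hmono : Monotone fun t => f t * Real.exp (t * M) :=
    monotone_of_hasDerivAt_nonneg hderiv' fun x =>
      mul_nonneg (by linarith [hM x]) (Real.exp_pos _).le
  have hle : f t * Real.exp (t * M) ≤ 0 := by simpa [h₁] using hmono ht
  exact le_antisymm (nonpos_of_mul_nonpos_left hle (Real.exp_pos _)) (hf t)

theorem Function.Periodic.eq_zero_of_neg_mul_le_deriv {f f' : ℝ → ℝ} {T M t₁ : ℝ}
    (hp : Function.Periodic f T) (hT : 0 < T) (hf : 0 ≤ f)
    (hderiv : ∀ t, HasDerivAt f (f' t) t) (hM : ∀ t, -M * f t ≤ f' t) (h₁ : f t₁ = 0)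
    (t : ℝ) : f t = 0 := by
  obtain ⟨n, hn⟩ := exists_nat_ge ((t - t₁) / T)
  rw [← hp.sub_nat_mul_eq n]
  refine eq_zero_of_le_of_neg_mul_le_deriv hf hderiv hM h₁ ?_
  rw [div_le_iff₀ hT] at hn
  linarith

variable {A : ℝ → Matrix ι ι ℝ} {w g : ℝ → ι → ℝ}

theorem IsCooperative.component_eq_zero_of_apply_eq_zero (hA : IsCooperative A)
    (hdiag : ∀ k, BddBelow (Set.range fun t => A t k k)) {T : ℝ} (hT : 0 < T)
    (hw : Function.Periodic w T) (hw0 : 0 ≤ w) (hg : 0 ≤ g)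
    (hderiv : ∀ t, HasDerivAt w (A t *ᵥ w t + g t) t) {k : ι} {t₁ : ℝ} (h₁ : w t₁ k = 0)
    (t : ℝ) : w t k = 0 := by
  obtain ⟨m, hm⟩ := hdiag k
  refine Function.Periodic.eq_zero_of_neg_mul_le_deriv (f := fun t => w t k) (M := -m)
    (fun t => congrFun (hw t) k) hT (fun t => hw0 t k)
    (fun t => hasDerivAt_pi.1 (hderiv t) k) (fun x => ?_) h₁ t
  calc -(-m) * w x k ≤ A x k k * w x k :=
        mul_le_mul_of_nonneg_right (by simpa using hm ⟨x, rfl⟩) (hw0 x k)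
    _ ≤ (A x *ᵥ w x) k := diag_mul_le_mulVec_apply (hA x) (hw0 x) k
    _ ≤ (A x *ᵥ w x + g x) k := le_add_of_nonneg_right (hg x k)

theorem IsCooperative.mul_eq_zero_of_component_eq_zero (hA : IsCooperative A) (hw0 : 0 ≤ w)
    (hg : 0 ≤ g) (hderiv : ∀ t, HasDerivAt w (A t *ᵥ w t + g t) t) {k : ι}
    (hk : ∀ t, w t k = 0) (t : ℝ) (j : ι) : A t k j * w t j = 0 := by
  have hzero : ∑ i, A t k i * w t i + g t k = 0 := by
    have hconst : (fun t => w t k) = fun _ => 0 := funext hk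
    have := hasDerivAt_pi.1 (hderiv t) k
    rw [hconst] at this
    exact this.unique (hasDerivAt_const t 0)
  have hterm : ∀ i ∈ Finset.univ, 0 ≤ A t k i * w t i := fun i _ => by
    rcases eq_or_ne k i with rfl | hki
    · rw [hk t, mul_zero]
    · exact mul_nonneg (hA t k i hki) (hw0 t i)
  have hsum : ∑ i, A t k i * w t i = 0 :=
    le_antisymm (by linarith [show 0 ≤ g t k from hg t k]) (Finset.sum_nonneg hterm)
  exact (Finset.sum_eq_zero_iff_of_nonneg hterm).1 hsum j (Finset.mem_univ j)

/-- Strong maximum principle for periodic solutions of a cooperative, strongly irreducible system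
with nonnegative forcing. -/
theorem IsCooperative.eq_zero_of_apply_eq_zero (hA : IsCooperative A)
    (hirr : IsStronglyIrreducible A) (hdiag : ∀ k, BddBelow (Set.range fun t => A t k k))
    {T : ℝ} (hT : 0 < T) (hw : Function.Periodic w T) (hw0 : 0 ≤ w) (hg : 0 ≤ g)
    (hderiv : ∀ t, HasDerivAt w (A t *ᵥ w t + g t) t) {t₀ : ℝ} {k₀ : ι} (h₀ : w t₀ k₀ = 0) :
    w = 0 ∧ g = 0 := by
  have hprop {k : ι} {t₁ : ℝ} (h₁ : w t₁ k = 0) (t : ℝ) : w t k = 0 :=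
    hA.component_eq_zero_of_apply_eq_zero hdiag hT hw hw0 hg hderiv h₁ t
  set Z : Set ι := {k | ∀ t, w t k = 0}
  have hZ : ∀ k, k ∈ Z := by
    by_contra! ⟨k₁, hk₁⟩
    obtain ⟨k, hk, j, hj, hkj⟩ := hirr Z ⟨k₀, hprop h₀⟩ ⟨k₁, hk₁⟩ t₀
    have hwj : w t₀ j = 0 := (mul_eq_zero.1
      (hA.mul_eq_zero_of_component_eq_zero hw0 hg hderiv hk t₀ j)).resolve_left hkj
    exact hj (hprop hwj)
  have hw_zero : w = 0 := funext fun t => funext fun k => hZ k t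
  refine ⟨hw_zero, funext fun t => ?_⟩
  have := hderiv t
  rw [hw_zero] at this
  simpa using this.unique (hasDerivAt_const t 0)

end MaximumPrinciple

theorem hasDerivAt_of_neg_deriv_add_mulVec_eq {φ : ℝ → ι → ℝ} {M : Matrix ι ι ℝ} {lam t : ℝ}
    (hφ : DifferentiableAt ℝ φ t) (heq : -deriv φ t + M *ᵥ φ t = lam • φ t) :
    HasDerivAt φ (M *ᵥ φ t - lam • φ t) t := by
  rw [← heq]
  simpa using hφ.hasDerivAt

theorem IsCooperative.eigenpair_eq_smul_of_le [Nonempty ι] [DecidableEq ι] {A : ℝ → Matrix ι ι ℝ}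
    (hA : IsCooperative A) (hirr : IsStronglyIrreducible A)
    (hdiag : ∀ k, BddBelow (Set.range fun t => A t k k)) {T : ℝ} (hT : 0 < T)
    {lam lam' : ℝ} {φ φ' : ℝ → ι → ℝ} (hφd : Differentiable ℝ φ) (hφ'd : Differentiable ℝ φ')
    (hφper : Function.Periodic φ T) (hφ'per : Function.Periodic φ' T)
    (hφpos : ∀ t k, 0 < φ t k) (hφ'pos : ∀ t k, 0 < φ' t k)
    (hφeq : ∀ t, -deriv φ t + A t *ᵥ φ t = lam • φ t)
    (hφ'eq : ∀ t, -deriv φ' t + A t *ᵥ φ' t = lam' • φ' t) (hle : lam' ≤ lam) :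
    lam = lam' ∧ ∃ s : ℝ, 0 < s ∧ ∀ t, φ t = s • φ' t := by
  obtain ⟨t₀, k₀, hmax⟩ := Function.Periodic.exists_forall_apply_le
    (f := fun t k => φ t k / φ' t k) (fun t => by simp only [hφper t, hφ'per t]) hT.ne'
    (continuous_pi fun k => ((continuous_apply k).comp hφd.continuous).div
      ((continuous_apply k).comp hφ'd.continuous) fun t => (hφ'pos t k).ne')
  set s := φ t₀ k₀ / φ' t₀ k₀
  set w : ℝ → ι → ℝ := fun t => s • φ' t - φ t
  have hw0 : 0 ≤ w := fun t k => by
    have := (div_le_iff₀ (hφ'pos t k)).1 (hmax t k)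
    simp only [w, Pi.sub_apply, Pi.smul_apply, smul_eq_mul, Pi.zero_apply]
    linarith
  have hw₀ : w t₀ k₀ = 0 := by
    simp [w, s, div_mul_cancel₀ _ (hφ'pos t₀ k₀).ne']
  have hg : 0 ≤ fun t => (lam - lam') • φ t := fun t k =>
    mul_nonneg (sub_nonneg.2 hle) (hφpos t k).le
  have hderiv (t : ℝ) :
      HasDerivAt w ((A t - lam' • 1) *ᵥ w t + (lam - lam') • φ t) t := by
    refine (((hasDerivAt_of_neg_deriv_add_mulVec_eq (hφ'd t) (hφ'eq t)).const_smul s).sub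
      (hasDerivAt_of_neg_deriv_add_mulVec_eq (hφd t) (hφeq t))).congr_deriv ?_
    simp only [w, sub_mulVec, smul_mulVec, one_mulVec, mulVec_sub, mulVec_smul]
    module
  have hdiag' (k : ι) : BddBelow (Set.range fun t => (A t - lam' • 1) k k) := by
    obtain ⟨m, hm⟩ := hdiag k
    refine ⟨m - lam', Set.forall_mem_range.2 fun t => ?_⟩
    simpa using hm ⟨t, rfl⟩
  obtain ⟨hw, hg0⟩ := (hA.sub_smul_one lam').eq_zero_of_apply_eq_zero (hirr.sub_smul_one lam')
    hdiag' hT (fun t => by simp only [w, hφper t, hφ'per t]) hw0 hg hderiv hw₀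
  refine ⟨?_, s, div_pos (hφpos t₀ k₀) (hφ'pos t₀ k₀),
    fun t => (sub_eq_zero.1 (congrFun hw t)).symm⟩
  have hforcing : (lam - lam') * φ t₀ k₀ = 0 := congrFun (congrFun hg0 t₀) k₀
  linarith [(mul_eq_zero.1 hforcing).resolve_right (hφpos t₀ k₀).ne']

theorem eq_one_of_sqrt_sum_mul_sq_eq_one {v : ι → ℝ} {s : ℝ} (hs : 0 < s)
    (h : √(∑ k, (s * v k) ^ 2) = 1) (hv : √(∑ k, v k ^ 2) = 1) : s = 1 := by
  simp_rw [mul_pow, ← Finset.mul_sum, Real.sqrt_mul (sq_nonneg s), Real.sqrt_sq hs.le, hv,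
    mul_one] at h
  exact h

/-- Uniqueness of the principal eigenpair for a continuous,
`T`-periodic, cooperative, strongly irreducible matrix function: two eigenpairs
with strictly positive `C¹` `T`-periodic eigenfunctions normalized by
`|φ(0)| = 1` (Euclidean norm) coincide. -/
theorem stmt1 (K : ℕ) (hK : 2 ≤ K) (T : ℝ) (hT : 0 < T)
    (A : ℝ → Matrix (Fin K) (Fin K) ℝ)
    (hAcont : ∀ k j, Continuous fun t => A t k j)
    (hAper : ∀ t, A (t + T) = A t)
    (hAcoop : ∀ t, ∀ k j : Fin K, k ≠ j → 0 ≤ A t k j)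
    (hAirr : ∀ S : Set (Fin K), S.Nonempty → Sᶜ.Nonempty → ∀ t,
      ∃ k ∈ S, ∃ j ∈ Sᶜ, A t k j ≠ 0)
    (lam lam' : ℝ) (φ φ' : ℝ → Fin K → ℝ)
    (hφC : ContDiff ℝ 1 φ) (hφ'C : ContDiff ℝ 1 φ')
    (hφper : ∀ t, φ (t + T) = φ t) (hφ'per : ∀ t, φ' (t + T) = φ' t)
    (hφpos : ∀ t k, 0 < φ t k) (hφ'pos : ∀ t k, 0 < φ' t k)
    (hφnorm : Real.sqrt (∑ k, (φ 0 k) ^ 2) = 1)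
    (hφ'norm : Real.sqrt (∑ k, (φ' 0 k) ^ 2) = 1)
    (hφeq : ∀ t, -deriv φ t + (A t).mulVec (φ t) = lam • φ t)
    (hφ'eq : ∀ t, -deriv φ' t + (A t).mulVec (φ' t) = lam' • φ' t) :
    lam = lam' ∧ ∀ t, φ t = φ' t := by
  have : Nonempty (Fin K) := ⟨⟨0, by omega⟩⟩
  have hdiag (k : Fin K) : BddBelow (Set.range fun t => A t k k) :=
    (Function.Periodic.compact_of_continuous (fun t => by simp only [hAper t]) hT.ne'
      (hAcont k k)).bddBelow
  have hφd := hφC.differentiable one_ne_zero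
  have hφ'd := hφ'C.differentiable one_ne_zero
  obtain ⟨hlam, s, hs, hφs⟩ : lam = lam' ∧ ∃ s : ℝ, 0 < s ∧ ∀ t, φ t = s • φ' t := by
    rcases le_total lam' lam with hle | hle
    · exact IsCooperative.eigenpair_eq_smul_of_le hAcoop hAirr hdiag hT hφd hφ'd hφper hφ'per
        hφpos hφ'pos hφeq hφ'eq hle
    · obtain ⟨hlam, s, hs, hφ's⟩ := IsCooperative.eigenpair_eq_smul_of_le hAcoop hAirr hdiag hT
        hφ'd hφd hφ'per hφper hφ'pos hφpos hφ'eq hφeq hle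
      refine ⟨hlam.symm, s⁻¹, inv_pos.2 hs, fun t => ?_⟩
      rw [hφ's t, smul_smul, inv_mul_cancel₀ hs.ne', one_smul]
  have hs1 : s = 1 := by
    simp only [hφs 0, Pi.smul_apply, smul_eq_mul] at hφnorm
    exact eq_one_of_sqrt_sum_mul_sq_eq_one hs hφnorm hφ'norm
  exact ⟨hlam, fun t => by rw [hφs t, hs1, one_smul]⟩
end

section
/- Let u⁻, u⁺ : [0,τ) × D̄ → ℝ^K be bounded continuous functions, continuously differentiable in t, such that for every x ∈ D̄ and t ∈ [0,τ): ∂_t u⁺(t,x) ≥ ∫_D κ(y−x) u⁺(t,y) dy − u⁺(t,x) + A(t,x) u⁺(t,x) componentwise, and ∂_t u⁻(t,x) ≤ ∫_D κ(y−x) u⁻(t,y) dy − u⁻(t,x) + A(t,x) u⁻(t,x) componentwise. If u⁻(0,x) ≤ u⁺(0,x) componentwise for all x ∈ D̄, then u⁻(t,x) ≤ u⁺(t,x) componentwise for all t ∈ [0,τ) and x ∈ D̄. -/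
open MeasureTheory Set Filter Topology

set_option maxHeartbeats 1000000 in
/-- Comparison principle for the time-periodic cooperative
nonlocal dispersal system with Dirichlet type boundary conditions: a bounded
subsolution that starts below a bounded supersolution stays below it on
`[0,τ) × D̄`. -/
theorem stmt4
    (N K : ℕ) (hN : 1 ≤ N) (hK : 2 ≤ K) (T τ : ℝ) (hT : 0 < T) (hτ : 0 < τ)
    (D : Set (EuclideanSpace ℝ (Fin N)))
    (hDo : IsOpen D) (hDb : Bornology.IsBounded D) (hDne : D.Nonempty)
    (κ : EuclideanSpace ℝ (Fin N) → ℝ)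
    (hκC : ContDiff ℝ 1 κ) (hκsupp : HasCompactSupport κ)
    (hκnn : ∀ z, 0 ≤ κ z) (hκ0 : 0 < κ 0)
    (hκint : ∫ z, κ z = 1)
    (A : ℝ → EuclideanSpace ℝ (Fin N) → Matrix (Fin K) (Fin K) ℝ)
    (hAcont : ∀ k j, ContinuousOn (fun p : ℝ × EuclideanSpace ℝ (Fin N) => A p.1 p.2 k j)
      (univ ×ˢ closure D))
    (hAper : ∀ t x, A (t + T) x = A t x)
    (hAcoop : ∀ t, ∀ x ∈ closure D, ∀ k j : Fin K, k ≠ j → 0 ≤ A t x k j)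
    (hAirr : ∀ S : Set (Fin K), S.Nonempty → Sᶜ.Nonempty → ∀ t, ∀ x ∈ closure D,
      ∃ k ∈ S, ∃ j ∈ Sᶜ, A t x k j ≠ 0)
    (uP uM duP duM : ℝ → EuclideanSpace ℝ (Fin N) → Fin K → ℝ)
    -- `u⁺`, `u⁻` are bounded on `[0,τ) × D̄`
    (hbdd : ∃ M : ℝ, ∀ t ∈ Ico (0:ℝ) τ, ∀ x ∈ closure D, ∀ k,
      |uP t x k| ≤ M ∧ |uM t x k| ≤ M)
    -- `u⁺`, `u⁻` are continuous on `[0,τ) × D̄`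
    (hcontP : ContinuousOn (fun p : ℝ × EuclideanSpace ℝ (Fin N) => uP p.1 p.2)
      (Ico 0 τ ×ˢ closure D))
    (hcontM : ContinuousOn (fun p : ℝ × EuclideanSpace ℝ (Fin N) => uM p.1 p.2)
      (Ico 0 τ ×ˢ closure D))
    -- `u⁺`, `u⁻` are continuously differentiable in `t`, with derivatives `du⁺`, `du⁻`
    (hdP : ∀ x ∈ closure D, ∀ t ∈ Ico (0:ℝ) τ, ∀ k,
      HasDerivWithinAt (fun s => uP s x k) (duP t x k) (Ico 0 τ) t)
    (hdM : ∀ x ∈ closure D, ∀ t ∈ Ico (0:ℝ) τ, ∀ k,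
      HasDerivWithinAt (fun s => uM s x k) (duM t x k) (Ico 0 τ) t)
    (hdcP : ∀ x ∈ closure D, ∀ k, ContinuousOn (fun t => duP t x k) (Ico 0 τ))
    (hdcM : ∀ x ∈ closure D, ∀ k, ContinuousOn (fun t => duM t x k) (Ico 0 τ))
    -- supersolution inequality
    (hsuper : ∀ t ∈ Ico (0:ℝ) τ, ∀ x ∈ closure D, ∀ k,
      (∫ y in D, κ (y - x) * uP t y k) - uP t x k + ∑ j, A t x k j * uP t x j
        ≤ duP t x k)
    -- subsolution inequality
    (hsub : ∀ t ∈ Ico (0:ℝ) τ, ∀ x ∈ closure D, ∀ k,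
      duM t x k ≤ (∫ y in D, κ (y - x) * uM t y k) - uM t x k
        + ∑ j, A t x k j * uM t x j)
    -- ordering at time 0
    (hinit : ∀ x ∈ closure D, ∀ k, uM 0 x k ≤ uP 0 x k) :
    ∀ t ∈ Ico (0:ℝ) τ, ∀ x ∈ closure D, ∀ k, uM t x k ≤ uP t x k := by
  obtain ⟨M, hM⟩ := hbdd
  have hDc : IsCompact (closure D) :=
    Metric.isCompact_of_isClosed_isBounded isClosed_closure hDb.closure
  have hDsub : D ⊆ closure D := subset_closure
  have hDmeas : MeasurableSet D := hDo.measurableSet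
  have hDfin : volume D < ⊤ := hDb.measure_lt_top
  have hκcont : Continuous κ := hκC.continuous
  have hκInt : Integrable κ := hκcont.integrable_of_hasCompactSupport hκsupp
  obtain ⟨Cκ, hCκ⟩ := hκsupp.exists_bound_of_continuous hκcont
  -- slice continuity in space
  have hsliceP : ∀ t ∈ Ico (0:ℝ) τ, ∀ k,
      ContinuousOn (fun y => uP t y k) (closure D) := by
    intro t ht k
    have h1 : ContinuousOn (fun y => uP t y) (closure D) :=
      hcontP.comp (Continuous.continuousOn (by fun_prop)) fun y hy => mk_mem_prod ht hy
    exact (continuous_apply k).comp_continuousOn h1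
  have hsliceM : ∀ t ∈ Ico (0:ℝ) τ, ∀ k,
      ContinuousOn (fun y => uM t y k) (closure D) := by
    intro t ht k
    have h1 : ContinuousOn (fun y => uM t y) (closure D) :=
      hcontM.comp (Continuous.continuousOn (by fun_prop)) fun y hy => mk_mem_prod ht hy
    exact (continuous_apply k).comp_continuousOn h1
  -- integrability of the nonlocal terms
  have hIntP : ∀ t ∈ Ico (0:ℝ) τ, ∀ (x : EuclideanSpace ℝ (Fin N)), ∀ k,
      IntegrableOn (fun y => κ (y - x) * uP t y k) D := by
    intro t ht x k
    have hmeas : AEStronglyMeasurable (fun y => κ (y - x) * uP t y k) (volume.restrict D) := by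
      apply ContinuousOn.aestronglyMeasurable ?_ hDmeas
      exact ((hκcont.comp (continuous_id.sub continuous_const)).continuousOn).mul
        (((hsliceP t ht k)).mono hDsub)
    refine Integrable.mono' (g := fun _ => Cκ * M)
      (integrableOn_const hDfin.ne) hmeas ?_
    refine (ae_restrict_iff' hDmeas).mpr (ae_of_all _ fun y hy => ?_)
    have h1 := hCκ (y - x)
    have h2 := (hM t ht y (hDsub hy) k).1
    rw [Real.norm_eq_abs] at h1 ⊢
    rw [abs_mul]
    exact mul_le_mul h1 h2 (abs_nonneg _) ((abs_nonneg _).trans h1)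
  have hIntM : ∀ t ∈ Ico (0:ℝ) τ, ∀ (x : EuclideanSpace ℝ (Fin N)), ∀ k,
      IntegrableOn (fun y => κ (y - x) * uM t y k) D := by
    intro t ht x k
    have hmeas : AEStronglyMeasurable (fun y => κ (y - x) * uM t y k) (volume.restrict D) := by
      apply ContinuousOn.aestronglyMeasurable ?_ hDmeas
      exact ((hκcont.comp (continuous_id.sub continuous_const)).continuousOn).mul
        (((hsliceM t ht k)).mono hDsub)
    refine Integrable.mono' (g := fun _ => Cκ * M)
      (integrableOn_const hDfin.ne) hmeas ?_
    refine (ae_restrict_iff' hDmeas).mpr (ae_of_all _ fun y hy => ?_)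
    have h1 := hCκ (y - x)
    have h2 := (hM t ht y (hDsub hy) k).2
    rw [Real.norm_eq_abs] at h1 ⊢
    rw [abs_mul]
    exact mul_le_mul h1 h2 (abs_nonneg _) ((abs_nonneg _).trans h1)
  -- translates of κ are integrable with mass at most 1
  have hκtrans : ∀ x : EuclideanSpace ℝ (Fin N), Integrable (fun y => κ (y - x)) := by
    intro x
    have hc : Continuous fun y : EuclideanSpace ℝ (Fin N) => κ (y - x) :=
      hκcont.comp (continuous_id.sub continuous_const)
    have hs : HasCompactSupport fun y : EuclideanSpace ℝ (Fin N) => κ (y - x) :=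
      hκsupp.comp_homeomorph (Homeomorph.subRight x)
    exact hc.integrable_of_hasCompactSupport hs
  have hκmass : ∀ x : EuclideanSpace ℝ (Fin N), (∫ y in D, κ (y - x)) ≤ 1 := by
    intro x
    have h1 : (∫ y in D, κ (y - x)) ≤ ∫ y, κ (y - x) :=
      setIntegral_le_integral (hκtrans x) (ae_of_all _ fun y => hκnn _)
    have h2 : (∫ y, κ (y - x)) = ∫ y, κ y := integral_sub_right_eq_self κ x
    rw [h2, hκint] at h1
    exact h1
  have hκmass0 : ∀ x : EuclideanSpace ℝ (Fin N), 0 ≤ ∫ y in D, κ (y - x) := fun x =>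
    setIntegral_nonneg hDmeas fun y _ => hκnn _
  intro t₀ ht₀ x₀ hx₀ k₀
  rcases eq_or_lt_of_le ht₀.1 with h0 | h0
  · rw [← h0]; exact hinit x₀ hx₀ k₀
  -- compact space-time cylinder up to time t₀
  set Kc : Set (ℝ × EuclideanSpace ℝ (Fin N)) := Icc 0 t₀ ×ˢ closure D with hKcdef
  have hKcIco : Kc ⊆ Ico 0 τ ×ˢ closure D :=
    prod_mono (fun s hs => ⟨hs.1, lt_of_le_of_lt hs.2 ht₀.2⟩) le_rfl
  have hKcomp : IsCompact Kc := isCompact_Icc.prod hDc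
  -- a uniform bound on the coefficients on the cylinder
  have hAc : ContinuousOn (fun p : ℝ × EuclideanSpace ℝ (Fin N) =>
      ∑ k : Fin K, ∑ j : Fin K, |A p.1 p.2 k j|) Kc := by
    refine continuousOn_finset_sum _ fun k _ => continuousOn_finset_sum _ fun j _ => ?_
    exact ((hAcont k j).mono (prod_mono (subset_univ _) le_rfl)).abs
  obtain ⟨C, hC⟩ := hKcomp.exists_bound_of_continuousOn hAc
  set C0 : ℝ := max C 0 with hC0def
  have hC0nn : 0 ≤ C0 := le_max_right _ _
  have hC0 : ∀ p ∈ Kc, ∀ k j, |A p.1 p.2 k j| ≤ C0 := by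
    intro p hp k j
    have h1 := hC p hp
    rw [Real.norm_eq_abs] at h1
    have h2 := le_abs_self (∑ k : Fin K, ∑ j : Fin K, |A p.1 p.2 k j|)
    have h3 : |A p.1 p.2 k j| ≤ ∑ j : Fin K, |A p.1 p.2 k j| :=
      Finset.single_le_sum (f := fun j => |A p.1 p.2 k j|)
        (fun j _ => abs_nonneg _) (Finset.mem_univ j)
    have h4 : (∑ j : Fin K, |A p.1 p.2 k j|)
        ≤ ∑ k : Fin K, ∑ j : Fin K, |A p.1 p.2 k j| :=
      Finset.single_le_sum (f := fun k => ∑ j : Fin K, |A p.1 p.2 k j|)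
        (fun k _ => Finset.sum_nonneg fun j _ => abs_nonneg _) (Finset.mem_univ k)
    have : |A p.1 p.2 k j| ≤ C := by linarith
    exact this.trans (le_max_left _ _)
  set L : ℝ := (K : ℝ) * C0 + 1 with hLdef
  -- the ε-barrier claim
  have key : ∀ ε > (0:ℝ), 0 < uP t₀ x₀ k₀ - uM t₀ x₀ k₀ + ε * Real.exp (2 * L * t₀) := by
    intro ε hε
    by_contra hcon
    push_neg at hcon
    set B : Set (ℝ × EuclideanSpace ℝ (Fin N)) :=
      {p | p ∈ Kc ∧ ∃ k, uP p.1 p.2 k - uM p.1 p.2 k + ε * Real.exp (2 * L * p.1) ≤ 0}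
      with hBdef
    have hBne : B.Nonempty :=
      ⟨(t₀, x₀), ⟨mk_mem_prod (right_mem_Icc.mpr ht₀.1) hx₀, k₀, hcon⟩⟩
    have hgcont : ∀ k : Fin K, ContinuousOn (fun p : ℝ × EuclideanSpace ℝ (Fin N) =>
        uP p.1 p.2 k - uM p.1 p.2 k + ε * Real.exp (2 * L * p.1)) Kc := by
      intro k
      have h1 : ContinuousOn (fun p : ℝ × EuclideanSpace ℝ (Fin N) => uP p.1 p.2 k) Kc :=
        (continuous_apply k).comp_continuousOn (hcontP.mono hKcIco)
      have h2 : ContinuousOn (fun p : ℝ × EuclideanSpace ℝ (Fin N) => uM p.1 p.2 k) Kc :=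
        (continuous_apply k).comp_continuousOn (hcontM.mono hKcIco)
      have hec : Continuous fun p : ℝ × EuclideanSpace ℝ (Fin N) =>
        ε * Real.exp (2 * L * p.1) := by fun_prop
      exact (h1.sub h2).add hec.continuousOn
    have hBcomp : IsCompact B := by
      have hBeq : B = ⋃ k : Fin K, (Kc ∩ {p : ℝ × EuclideanSpace ℝ (Fin N) |
          uP p.1 p.2 k - uM p.1 p.2 k + ε * Real.exp (2 * L * p.1) ≤ 0}) := by
        ext p
        simp only [hBdef, mem_setOf_eq, mem_iUnion, mem_inter_iff]
        tauto
      rw [hBeq]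
      refine isCompact_iUnion fun k => ?_
      haveI : CompactSpace Kc := isCompact_iff_compactSpace.mp hKcomp
      have hcl : IsClosed {q : Kc | uP (q : ℝ × EuclideanSpace ℝ (Fin N)).1
          (q : ℝ × EuclideanSpace ℝ (Fin N)).2 k
          - uM (q : ℝ × EuclideanSpace ℝ (Fin N)).1 (q : ℝ × EuclideanSpace ℝ (Fin N)).2 k
          + ε * Real.exp (2 * L * (q : ℝ × EuclideanSpace ℝ (Fin N)).1) ≤ 0} :=
        isClosed_le ((hgcont k).restrict) continuous_const
      have himg := (hcl.isCompact).image continuous_subtype_val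
      have : Subtype.val '' {q : Kc | uP (q : ℝ × EuclideanSpace ℝ (Fin N)).1
          (q : ℝ × EuclideanSpace ℝ (Fin N)).2 k
          - uM (q : ℝ × EuclideanSpace ℝ (Fin N)).1 (q : ℝ × EuclideanSpace ℝ (Fin N)).2 k
          + ε * Real.exp (2 * L * (q : ℝ × EuclideanSpace ℝ (Fin N)).1) ≤ 0}
          = Kc ∩ {p : ℝ × EuclideanSpace ℝ (Fin N) |
            uP p.1 p.2 k - uM p.1 p.2 k + ε * Real.exp (2 * L * p.1) ≤ 0} :=
        Subtype.image_preimage_coe Kc {p : ℝ × EuclideanSpace ℝ (Fin N) |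
            uP p.1 p.2 k - uM p.1 p.2 k + ε * Real.exp (2 * L * p.1) ≤ 0}
      rwa [this] at himg
    obtain ⟨⟨t1, x1⟩, hp1B, hmin'⟩ := hBcomp.exists_isMinOn hBne continuous_fst.continuousOn
    have hmin : ∀ q ∈ B, t1 ≤ q.1 := fun q hq => hmin' hq
    obtain ⟨hp1K, k1, hbad⟩ := hp1B
    obtain ⟨hpt, hpx⟩ := mem_prod.mp hp1K
    have ht1τ : t1 ∈ Ico (0:ℝ) τ := ⟨hpt.1, lt_of_le_of_lt hpt.2 ht₀.2⟩
    set m : ℝ := ε * Real.exp (2 * L * t1) with hmdef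
    have hm : 0 < m := mul_pos hε (Real.exp_pos _)
    have ht1pos : 0 < t1 := by
      rcases hpt.1.lt_or_eq with h | h
      · exact h
      · exfalso
        have h1 := hinit x1 hpx k1
        rw [← h] at hbad
        have h3 : (0:ℝ) < ε * Real.exp (2 * L * 0) := mul_pos hε (Real.exp_pos _)
        simp only at hbad
        linarith
    -- before time t1 everything is strictly above the barrier
    have hpre : ∀ s ∈ Ico (0:ℝ) t1, ∀ y ∈ closure D, ∀ k,
        0 < uP s y k - uM s y k + ε * Real.exp (2 * L * s) := by
      intro s hs y hy k
      by_contra hle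
      push_neg at hle
      have hmem : (s, y) ∈ B :=
        ⟨mk_mem_prod ⟨hs.1, hs.2.le.trans hpt.2⟩ hy, k, hle⟩
      exact absurd (hmin _ hmem) (not_le.mpr hs.2)
    have hIcoτ : Ico (0:ℝ) t1 ⊆ Ico 0 τ := fun s hs =>
      ⟨hs.1, hs.2.trans ht1τ.2⟩
    haveI hneBot : (𝓝[Ico (0:ℝ) t1] t1).NeBot := by
      apply mem_closure_iff_nhdsWithin_neBot.mp
      rw [closure_Ico ht1pos.ne]
      exact ⟨ht1pos.le, le_refl t1⟩
    -- at time t1 everything is ≥ -m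
    have hglob : ∀ y ∈ closure D, ∀ k, -m ≤ uP t1 y k - uM t1 y k := by
      intro y hy k
      have hcP : ContinuousWithinAt (fun s => uP s y k) (Ico 0 τ) t1 :=
        (hdP y hy t1 ht1τ k).continuousWithinAt
      have hcM : ContinuousWithinAt (fun s => uM s y k) (Ico 0 τ) t1 :=
        (hdM y hy t1 ht1τ k).continuousWithinAt
      have hexpc : Continuous fun s : ℝ => ε * Real.exp (2 * L * s) := by fun_prop
      have hexp : Filter.Tendsto (fun s : ℝ => ε * Real.exp (2 * L * s))
          (𝓝[Ico (0:ℝ) t1] t1) (𝓝 (ε * Real.exp (2 * L * t1))) :=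
        (hexpc.continuousWithinAt).tendsto
      have htend : Filter.Tendsto
          (fun s => uP s y k - uM s y k + ε * Real.exp (2 * L * s))
          (𝓝[Ico (0:ℝ) t1] t1)
          (𝓝 (uP t1 y k - uM t1 y k + ε * Real.exp (2 * L * t1))) := by
        refine Filter.Tendsto.add ?_ hexp
        exact ((hcP.sub hcM).tendsto).mono_left (nhdsWithin_mono _ hIcoτ)
      have hge : 0 ≤ uP t1 y k - uM t1 y k + ε * Real.exp (2 * L * t1) := by
        refine ge_of_tendsto htend ?_
        filter_upwards [self_mem_nhdsWithin] with s hs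
        exact (hpre s hs y hy k).le
      rw [hmdef]; linarith
    -- derivative at t1 of the barrier-shifted function at the touching point
    have hIccsub : Icc (0:ℝ) t1 ⊆ Ico 0 τ := fun s hs =>
      ⟨hs.1, lt_of_le_of_lt hs.2 ht1τ.2⟩
    have hder : HasDerivWithinAt
        (fun s => uP s x1 k1 - uM s x1 k1 + ε * Real.exp (2 * L * s))
        (duP t1 x1 k1 - duM t1 x1 k1 + ε * (Real.exp (2 * L * t1) * (2 * L)))
        (Icc 0 t1) t1 := by
      have h1 := (hdP x1 hpx t1 ht1τ k1).sub (hdM x1 hpx t1 ht1τ k1)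
      have h3 : HasDerivAt (fun s : ℝ => 2 * L * s) (2 * L) t1 := by
        simpa using (hasDerivAt_id t1).const_mul (2 * L)
      have h2 : HasDerivAt (fun s : ℝ => ε * Real.exp (2 * L * s))
          (ε * (Real.exp (2 * L * t1) * (2 * L))) t1 := (h3.exp).const_mul ε
      exact (h1.add h2.hasDerivWithinAt).mono hIccsub
    have hd0 : duP t1 x1 k1 - duM t1 x1 k1 + ε * (Real.exp (2 * L * t1) * (2 * L)) ≤ 0 := by
      rw [hasDerivWithinAt_iff_tendsto_slope] at hder
      rw [Icc_sdiff_right] at hder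
      refine le_of_tendsto hder ?_
      filter_upwards [self_mem_nhdsWithin] with s hs
      have hfs := hpre s hs x1 hpx k1
      have hft : uP t1 x1 k1 - uM t1 x1 k1 + ε * Real.exp (2 * L * t1) ≤ 0 := hbad
      rw [slope_def_field]
      apply div_nonpos_of_nonneg_of_nonpos
      · linarith
      · linarith [hs.2]
    -- the differential inequalities at (t1, x1)
    have hsupe := hsuper t1 ht1τ x1 hpx k1
    have hsube := hsub t1 ht1τ x1 hpx k1
    have hIeq : (∫ y in D, κ (y - x1) * uP t1 y k1) - ∫ y in D, κ (y - x1) * uM t1 y k1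
        = ∫ y in D, κ (y - x1) * (uP t1 y k1 - uM t1 y k1) := by
      rw [← integral_sub (hIntP t1 ht1τ x1 k1) (hIntM t1 ht1τ x1 k1)]
      congr 1
      ext y
      ring
    have hIntW : IntegrableOn (fun y => κ (y - x1) * (uP t1 y k1 - uM t1 y k1)) D := by
      have h := (hIntP t1 ht1τ x1 k1).sub (hIntM t1 ht1τ x1 k1)
      exact MeasureTheory.IntegrableOn.congr_fun h
        (fun y _ => by simp only [Pi.sub_apply]; ring) hDmeas
    have hIlow : -m ≤ ∫ y in D, κ (y - x1) * (uP t1 y k1 - uM t1 y k1) := by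
      have h1 : (∫ y in D, κ (y - x1) * (-m))
          ≤ ∫ y in D, κ (y - x1) * (uP t1 y k1 - uM t1 y k1) := by
        refine setIntegral_mono_on ((hκtrans x1).mul_const (-m)).integrableOn hIntW hDmeas ?_
        intro y hy
        exact mul_le_mul_of_nonneg_left (hglob y (hDsub hy) k1) (hκnn _)
      have h2 : (∫ y in D, κ (y - x1) * (-m))
          = (∫ y in D, κ (y - x1)) * (-m) := by
        rw [integral_mul_const]
      nlinarith [hκmass x1, hκmass0 x1]
    have hsumeq : (∑ j, A t1 x1 k1 j * uP t1 x1 j) - ∑ j, A t1 x1 k1 j * uM t1 x1 j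
        = ∑ j, A t1 x1 k1 j * (uP t1 x1 j - uM t1 x1 j) := by
      rw [← Finset.sum_sub_distrib]
      exact Finset.sum_congr rfl fun j _ => (mul_sub _ _ _).symm
    have hsum : -((K : ℝ) * C0 * m) ≤ ∑ j, A t1 x1 k1 j * (uP t1 x1 j - uM t1 x1 j) := by
      have hterm : ∀ j : Fin K, -(C0 * m) ≤ A t1 x1 k1 j * (uP t1 x1 j - uM t1 x1 j) := by
        intro j
        have habs : |A t1 x1 k1 j| ≤ C0 := hC0 (t1, x1) hp1K k1 j
        obtain ⟨habs1, habs2⟩ := abs_le.mp habs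
        have hwj := hglob x1 hpx j
        by_cases hjk : j = k1
        · subst hjk
          have hwk : uP t1 x1 j - uM t1 x1 j ≤ -m := by
            have := hbad; rw [hmdef]; linarith
          have hw : uP t1 x1 j - uM t1 x1 j = -m := le_antisymm hwk hwj
          rw [hw]
          nlinarith
        · have ha0 : 0 ≤ A t1 x1 k1 j := hAcoop t1 x1 hpx k1 j fun h => hjk h.symm
          have h1 : A t1 x1 k1 j * (-m) ≤ A t1 x1 k1 j * (uP t1 x1 j - uM t1 x1 j) :=
            mul_le_mul_of_nonneg_left hwj ha0
          nlinarith
      calc -((K : ℝ) * C0 * m) = ∑ _j : Fin K, -(C0 * m) := by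
            rw [Finset.sum_const, Finset.card_univ, Fintype.card_fin, nsmul_eq_mul]; ring
        _ ≤ ∑ j, A t1 x1 k1 j * (uP t1 x1 j - uM t1 x1 j) :=
            Finset.sum_le_sum fun j _ => hterm j
    -- combine everything
    have hbad' : uP t1 x1 k1 - uM t1 x1 k1 ≤ -m := by
      have := hbad; rw [hmdef]; linarith
    have hlow : -m + m + -((K : ℝ) * C0 * m) ≤ duP t1 x1 k1 - duM t1 x1 k1 := by
      have h1 : (∫ y in D, κ (y - x1) * (uP t1 y k1 - uM t1 y k1))
          - (uP t1 x1 k1 - uM t1 x1 k1)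
          + ∑ j, A t1 x1 k1 j * (uP t1 x1 j - uM t1 x1 j)
          ≤ duP t1 x1 k1 - duM t1 x1 k1 := by
        rw [← hIeq, ← hsumeq]
        linarith
      linarith
    have hεm : ε * (Real.exp (2 * L * t1) * (2 * L)) = m * (2 * L) := by
      rw [hmdef]; ring
    rw [hεm] at hd0
    rw [hLdef] at hd0
    nlinarith [hm, hC0nn, Nat.cast_nonneg (α := ℝ) K,
      mul_nonneg (mul_nonneg (Nat.cast_nonneg (α := ℝ) K) hC0nn) hm.le]
  -- let ε → 0
  refine le_of_forall_pos_le_add fun δ hδ => ?_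
  have hε : 0 < δ / Real.exp (2 * L * t₀) := div_pos hδ (Real.exp_pos _)
  have hkey := key _ hε
  rw [div_mul_cancel₀ _ (Real.exp_pos (2 * L * t₀)).ne'] at hkey
  linarith
end

section
/- Let u⁻, u⁺ : [0,τ) × ℝ^N → ℝ^K be bounded continuous functions, continuously differentiable in t, such that for every x ∈ ℝ^N and t ∈ [0,τ): ∂_t u⁺(t,x) ≥ ∫_{ℝ^N} κ(y−x)[u⁺(t,y) − u⁺(t,x)] dy + A(t,x) u⁺(t,x) componentwise, and ∂_t u⁻(t,x) ≤ ∫_{ℝ^N} κ(y−x)[u⁻(t,y) − u⁻(t,x)] dy + A(t,x) u⁻(t,x) componentwise. If u⁻(0,x) ≤ u⁺(0,x) componentwise for all x ∈ ℝ^N, then u⁻(t,x) ≤ u⁺(t,x) componentwise for all t ∈ [0,τ) and x ∈ ℝ^N. -/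
/-!
The difference `v = u⁻ - u⁺` is a subsolution of the linear cooperative system
`v_t ≤ ∫ κ(y - x) (v(y) - v(x)) dy + A v`. Since `κ` is a probability density and `A` is bounded
(continuous and periodic, `|A| ≤ C`) and cooperative, a bound `v ≤ D sⁿ` on `[0,τ) × ℝ^N`
improves, through the integrating factor `e^{(1 + C) s}`, to `v ≤ Λ D tⁿ⁺¹ / (n + 1)` with
`Λ = 1 + 2 C K`. Iterating from `v ≤ M` gives `v ≤ M (Λ t)ⁿ / n!` for every `n`, hence `v ≤ 0`.
No supremum over `x` is ever taken, so no differentiability of such a supremum is needed.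
-/

open MeasureTheory Set

theorem apply_add_eq_of_mem_addSubgroupClosure {G β : Type*} [AddGroup G] {f : G → β}
    {s : Set G} (hs : ∀ v ∈ s, ∀ x, f (x + v) = f x) {v : G} (hv : v ∈ AddSubgroup.closure s)
    (x : G) : f (x + v) = f x := by
  induction hv using AddSubgroup.closure_induction generalizing x with
  | mem v hv => exact hs v hv x
  | zero => rw [add_zero]
  | add v w _ _ hv hw => rw [← add_assoc, hw, hv]
  | neg v _ hv => rw [← hv (x + -v), neg_add_cancel_right]

theorem EuclideanSpace.exists_mem_Ico_sub_mem_closure_single {N : ℕ} {p : Fin N → ℝ}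
    (hp : ∀ l, 0 < p l) (x : EuclideanSpace ℝ (Fin N)) :
    ∃ y : EuclideanSpace ℝ (Fin N), (∀ l, y l ∈ Ico 0 (p l)) ∧
      x - y ∈ AddSubgroup.closure (range fun l => EuclideanSpace.single l (p l)) := by
  refine ⟨WithLp.toLp 2 fun l => toIcoMod (hp l) 0 (x l), fun l => toIcoMod_mem_Ico' _ _, ?_⟩
  have hdiff : x - WithLp.toLp 2 (fun l => toIcoMod (hp l) 0 (x l))
      = ∑ l, toIcoDiv (hp l) 0 (x l) • EuclideanSpace.single l (p l) := by
    ext i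
    simp [WithLp.ofLp_sum, Pi.single_apply]
  rw [hdiff]
  exact AddSubgroup.sum_mem _ fun l _ =>
    AddSubgroup.zsmul_mem _ (AddSubgroup.subset_closure (mem_range_self l)) _

theorem exists_norm_le_of_periodic {β : Type*} [SeminormedAddCommGroup β] {N : ℕ} {T : ℝ}
    (hT : 0 < T) {p : Fin N → ℝ} (hp : ∀ l, 0 < p l) {f : ℝ → EuclideanSpace ℝ (Fin N) → β}
    (hf : Continuous fun q : ℝ × EuclideanSpace ℝ (Fin N) => f q.1 q.2)
    (hper : ∀ t x, f (t + T) x = f t x)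
    (hsper : ∀ t x l, f t (x + EuclideanSpace.single l (p l)) = f t x) :
    ∃ C, ∀ t x, ‖f t x‖ ≤ C := by
  have hbox : IsCompact (WithLp.toLp 2 '' univ.pi fun l => Icc 0 (p l)) :=
    (isCompact_univ_pi fun l => isCompact_Icc).image (PiLp.continuous_toLp 2 _)
  obtain ⟨C, hC⟩ := (isCompact_Icc.prod hbox).exists_bound_of_continuousOn hf.continuousOn
  refine ⟨C, fun t x => ?_⟩
  obtain ⟨t', ht', hft⟩ :=
    Function.Periodic.exists_mem_Ico₀ (f := f) (fun t => funext (hper t)) hT t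
  obtain ⟨y, hy, hxy⟩ := EuclideanSpace.exists_mem_Ico_sub_mem_closure_single hp x
  have hfx : f t' x = f t' y := by
    simpa using apply_add_eq_of_mem_addSubgroupClosure (f := f t')
      (by rintro _ ⟨l, rfl⟩ z; exact hsper t' z l) hxy y
  rw [hft, hfx]
  exact hC (t', y) ⟨Ico_subset_Icc_self ht', y.ofLp, fun l _ => Ico_subset_Icc_self (hy l), rfl⟩

theorem sum_mul_add_mul_le_of_cooperative {ι : Type*} [Fintype ι] {A : Matrix ι ι ℝ} {C B : ℝ}
    (hAC : ∀ k j, |A k j| ≤ C) (hcoop : ∀ k j, k ≠ j → 0 ≤ A k j) {w : ι → ℝ}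
    (hw : ∀ j, w j ≤ B) (hB : 0 ≤ B) (k : ι) :
    ∑ j, A k j * w j + C * w k ≤ 2 * C * Fintype.card ι * B := by
  classical
  have hC : 0 ≤ C := (abs_nonneg _).trans (hAC k k)
  have hshift : ∑ j, A k j * w j + C * w k = ∑ j, (A k j + if j = k then C else 0) * w j := by
    simp [add_mul, Finset.sum_add_distrib]
  rw [hshift]
  calc ∑ j, (A k j + if j = k then C else 0) * w j ≤ ∑ _j : ι, 2 * C * B := by
        refine Finset.sum_le_sum fun j _ => ?_
        have hA := abs_le.mp (hAC k j)
        have hcoef : 0 ≤ A k j + (if j = k then C else 0) ∧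
            A k j + (if j = k then C else 0) ≤ 2 * C := by
          split_ifs with hjk
          · constructor <;> linarith
          · exact ⟨by simpa using hcoop k j (Ne.symm hjk), by linarith⟩
        calc _ ≤ (A k j + if j = k then C else 0) * B := mul_le_mul_of_nonneg_left (hw j) hcoef.1
          _ ≤ 2 * C * B := mul_le_mul_of_nonneg_right hcoef.2 hB
    _ = 2 * C * Fintype.card ι * B := by
        rw [Finset.sum_const, Finset.card_univ, nsmul_eq_mul]
        ring

theorem ContinuousOn.continuous_apply_of_prod_univ {X Y ι β : Type*} [TopologicalSpace X]
    [TopologicalSpace Y] [TopologicalSpace β] {u : X → Y → ι → β} {s : Set X}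
    (hu : ContinuousOn (fun q : X × Y => u q.1 q.2) (s ×ˢ univ)) {t : X} (ht : t ∈ s) (k : ι) :
    Continuous fun y => u t y k :=
  (continuous_apply k).comp (hu.comp_continuous (Continuous.prodMk_right t) fun _ => ⟨ht, trivial⟩)

section Kernel

variable {E : Type*} [NormedAddCommGroup E] [MeasurableSpace E] [BorelSpace E] {μ : Measure E}
  {κ : E → ℝ}

theorem integrable_kernel_mul [IsFiniteMeasureOnCompacts μ] (hκ : Continuous κ)
    (hκs : HasCompactSupport κ) (x : E) {g : E → ℝ} (hg : Continuous g) :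
    Integrable (fun y => κ (y - x) * g y) μ :=
  ((hκ.comp (continuous_sub_right x)).mul hg).integrable_of_hasCompactSupport
    (hκs.comp_homeomorph (Homeomorph.subRight x)).mul_right

theorem integral_kernel_mul_sub_sub [IsFiniteMeasureOnCompacts μ] (hκ : Continuous κ)
    (hκs : HasCompactSupport κ) (x : E) {g₁ g₂ : E → ℝ} (hg₁ : Continuous g₁)
    (hg₂ : Continuous g₂) :
    ∫ y, κ (y - x) * ((g₁ y - g₂ y) - (g₁ x - g₂ x)) ∂μ
      = (∫ y, κ (y - x) * (g₁ y - g₁ x) ∂μ) - ∫ y, κ (y - x) * (g₂ y - g₂ x) ∂μ := by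
  rw [← integral_sub (integrable_kernel_mul hκ hκs x (g := fun y => g₁ y - g₁ x)
    (hg₁.sub continuous_const))
    (integrable_kernel_mul hκ hκs x (g := fun y => g₂ y - g₂ x) (hg₂.sub continuous_const))]
  congr 1 with y
  ring

theorem integral_kernel_mul_sub_le [IsFiniteMeasureOnCompacts μ] [μ.IsAddRightInvariant]
    (hκ : Continuous κ) (hκs : HasCompactSupport κ) (hκnn : ∀ z, 0 ≤ κ z)
    (hκint : ∫ z, κ z ∂μ = 1) (x : E) {g : E → ℝ} {B : ℝ} (hg : Continuous g)
    (hgB : ∀ y, g y ≤ B) :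
    ∫ y, κ (y - x) * (g y - g x) ∂μ ≤ B - g x :=
  calc ∫ y, κ (y - x) * (g y - g x) ∂μ ≤ ∫ y, κ (y - x) * (B - g x) ∂μ :=
        integral_mono (integrable_kernel_mul hκ hκs x (hg.sub continuous_const))
          (integrable_kernel_mul hκ hκs x continuous_const)
          fun y => mul_le_mul_of_nonneg_left (by linarith [hgB y]) (hκnn _)
    _ = B - g x := by rw [integral_mul_const, integral_sub_right_eq_self κ x, hκint, one_mul]

theorem sub_le_integral_kernel_add_sum {ι : Type*} [Fintype ι] [IsFiniteMeasureOnCompacts μ]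
    (hκ : Continuous κ) (hκs : HasCompactSupport κ) {A : Matrix ι ι ℝ} {u₁ u₂ : E → ι → ℝ}
    {d₁ d₂ : ℝ} {x : E} {k : ι} (hu₁ : Continuous fun y => u₁ y k)
    (hu₂ : Continuous fun y => u₂ y k)
    (h₁ : d₁ ≤ (∫ y, κ (y - x) * (u₁ y k - u₁ x k) ∂μ) + ∑ j, A k j * u₁ x j)
    (h₂ : (∫ y, κ (y - x) * (u₂ y k - u₂ x k) ∂μ) + ∑ j, A k j * u₂ x j ≤ d₂) :
    d₁ - d₂ ≤ (∫ y, κ (y - x) * ((u₁ y k - u₂ y k) - (u₁ x k - u₂ x k)) ∂μ)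
      + ∑ j, A k j * (u₁ x j - u₂ x j) := by
  have hsum : ∑ j, A k j * (u₁ x j - u₂ x j) = ∑ j, A k j * u₁ x j - ∑ j, A k j * u₂ x j := by
    rw [← Finset.sum_sub_distrib]
    simp only [mul_sub]
  rw [integral_kernel_mul_sub_sub hκ hκs x hu₁ hu₂, hsum]
  linarith

end Kernel

theorem le_mul_pow_succ_div_of_deriv_add_mul_le {f f' : ℝ → ℝ} {c a t : ℝ} {n : ℕ}
    (hc : 0 ≤ c) (ha : 0 ≤ a) (ht : 0 ≤ t) (hf : ContinuousOn f (Icc 0 t))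
    (hf' : ∀ s ∈ Ico 0 t, HasDerivWithinAt f (f' s) (Ici s) s) (h0 : f 0 ≤ 0)
    (hbound : ∀ s ∈ Ico 0 t, f' s + c * f s ≤ a * s ^ n) :
    f t ≤ a * t ^ (n + 1) / (n + 1) := by
  have hexp : ∀ s, HasDerivAt (fun s => Real.exp (c * s)) (Real.exp (c * s) * c) s := fun s => by
    simpa using ((hasDerivAt_id s).const_mul c).exp
  have hboundary : ∀ s, HasDerivAt (fun s => Real.exp (c * t) * (a * s ^ (n + 1) / (n + 1)))
      (Real.exp (c * t) * (a * s ^ n)) s := fun s => by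
    refine ((((hasDerivAt_pow (n + 1) s).const_mul a).div_const (n + 1)).const_mul
      (Real.exp (c * t))).congr_deriv ?_
    push_cast
    field_simp
  have hweighted := image_le_of_deriv_right_le_deriv_boundary (a := 0) (b := t)
    (f := fun s => Real.exp (c * s) * f s) (f' := fun s => Real.exp (c * s) * (f' s + c * f s))
    ((Real.continuous_exp.comp (continuous_const_mul c)).continuousOn.mul hf)
    (fun s hs => by
      refine ((hexp s).hasDerivWithinAt.mul (hf' s hs)).congr_deriv ?_
      ring)
    (by simpa using h0) (fun s _ => (hboundary s).continuousAt.continuousWithinAt)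
    (fun s _ => (hboundary s).hasDerivWithinAt)
    (fun s hs => calc
      Real.exp (c * s) * (f' s + c * f s) ≤ Real.exp (c * s) * (a * s ^ n) :=
        mul_le_mul_of_nonneg_left (hbound s hs) (Real.exp_pos _).le
      _ ≤ Real.exp (c * t) * (a * s ^ n) :=
        mul_le_mul_of_nonneg_right (Real.exp_le_exp.mpr (by nlinarith [hs.2]))
          (mul_nonneg ha (pow_nonneg hs.1 n)))
    (right_mem_Icc.mpr ht)
  exact le_of_mul_le_mul_left hweighted (Real.exp_pos _)

theorem nonpos_of_forall_le_mul_pow_div_factorial {x D r : ℝ}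
    (h : ∀ n : ℕ, x ≤ D * r ^ n / n.factorial) : x ≤ 0 := by
  have hlim := (FloorSemiring.tendsto_pow_div_factorial_atTop r).const_mul D
  rw [mul_zero] at hlim
  exact ge_of_tendsto' hlim fun n => (h n).trans_eq (mul_div_assoc _ _ _)

section Comparison

variable {E ι : Type*} [NormedAddCommGroup E] [MeasurableSpace E] [BorelSpace E] {μ : Measure E}
  [IsFiniteMeasureOnCompacts μ] [μ.IsAddRightInvariant] [Fintype ι] {κ : E → ℝ}

theorem add_mul_le_of_le_integral_kernel_add_sum (hκ : Continuous κ) (hκs : HasCompactSupport κ)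
    (hκnn : ∀ z, 0 ≤ κ z) (hκint : ∫ z, κ z ∂μ = 1) {A : Matrix ι ι ℝ} {C : ℝ}
    (hAC : ∀ k j, |A k j| ≤ C) (hcoop : ∀ k j, k ≠ j → 0 ≤ A k j) {w : E → ι → ℝ} {B d : ℝ}
    (hB : 0 ≤ B) (hwB : ∀ y j, w y j ≤ B) {x : E} {k : ι} (hwc : Continuous fun y => w y k)
    (hd : d ≤ (∫ y, κ (y - x) * (w y k - w x k) ∂μ) + ∑ j, A k j * w x j) :
    d + (1 + C) * w x k ≤ (1 + 2 * C * Fintype.card ι) * B := by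
  have hkernel := integral_kernel_mul_sub_le hκ hκs hκnn hκint x hwc fun y => hwB y k
  have hmatrix := sum_mul_add_mul_le_of_cooperative hAC hcoop (hwB x) hB k
  linarith

theorem nonpos_of_cooperative_subsolution (hκ : Continuous κ) (hκs : HasCompactSupport κ)
    (hκnn : ∀ z, 0 ≤ κ z) (hκint : ∫ z, κ z ∂μ = 1) {A : ℝ → E → Matrix ι ι ℝ} {C : ℝ}
    (hC : 0 ≤ C) (hAC : ∀ t x k j, |A t x k j| ≤ C)
    (hcoop : ∀ t x k j, k ≠ j → 0 ≤ A t x k j) {τ M : ℝ} {v dv : ℝ → E → ι → ℝ}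
    (hvM : ∀ t ∈ Ico 0 τ, ∀ x k, v t x k ≤ M)
    (hvc : ∀ t ∈ Ico 0 τ, ∀ k, Continuous fun y => v t y k)
    (hdv : ∀ x, ∀ t ∈ Ico 0 τ, ∀ k,
      HasDerivWithinAt (fun s => v s x k) (dv t x k) (Ico 0 τ) t)
    (hsub : ∀ t ∈ Ico 0 τ, ∀ x k,
      dv t x k ≤ (∫ y, κ (y - x) * (v t y k - v t x k) ∂μ) + ∑ j, A t x k j * v t x j)
    (h0 : ∀ x k, v 0 x k ≤ 0) :
    ∀ t ∈ Ico 0 τ, ∀ x k, v t x k ≤ 0 := by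
  set Λ : ℝ := 1 + 2 * C * Fintype.card ι
  have hΛ : 0 ≤ Λ := by positivity
  have step : ∀ (n : ℕ) (D : ℝ), 0 ≤ D → (∀ s ∈ Ico 0 τ, ∀ y j, v s y j ≤ D * s ^ n) →
      ∀ t ∈ Ico 0 τ, ∀ x k, v t x k ≤ Λ * D * t ^ (n + 1) / (n + 1) := by
    intro n D hD hvD t ht x k
    have hsub_t : Icc 0 t ⊆ Ico 0 τ := Icc_subset_Ico_right ht.2
    refine le_mul_pow_succ_div_of_deriv_add_mul_le (c := 1 + C) (f' := fun s => dv s x k)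
      (by positivity) (by positivity) ht.1
      (fun s hs => (hdv x s (hsub_t hs) k).continuousWithinAt.mono hsub_t)
      (fun s hs => (hdv x s (hsub_t (Ico_subset_Icc_self hs)) k).mono_of_mem_nhdsWithin
        (Ico_mem_nhdsGE_of_mem (hsub_t (Ico_subset_Icc_self hs))))
      (h0 x k) fun s hs => ?_
    have hs := hsub_t (Ico_subset_Icc_self hs)
    rw [mul_assoc]
    exact add_mul_le_of_le_integral_kernel_add_sum hκ hκs hκnn hκint (hAC s x) (hcoop s x)
      (mul_nonneg hD (pow_nonneg hs.1 n)) (hvD s hs) (hvc s hs k) (hsub s hs x k)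
  clear_value Λ
  obtain ⟨M', hMM', hM'⟩ : ∃ M', M ≤ M' ∧ 0 ≤ M' :=
    ⟨max M 0, le_max_left M 0, le_max_right M 0⟩
  have hbound : ∀ n : ℕ, ∀ t ∈ Ico 0 τ, ∀ x k, v t x k ≤ M' * (Λ * t) ^ n / n.factorial := by
    intro n
    induction n with
    | zero =>
      intro t ht x k
      rw [pow_zero, Nat.factorial_zero, Nat.cast_one, div_one, mul_one]
      exact (hvM t ht x k).trans hMM'
    | succ n ih =>
      intro t ht x k
      have hD : 0 ≤ M' * Λ ^ n / n.factorial := by positivity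
      have hvD : ∀ s ∈ Ico 0 τ, ∀ y j, v s y j ≤ M' * Λ ^ n / n.factorial * s ^ n :=
        fun s hs y j => (ih s hs y j).trans_eq (by ring)
      refine (step n _ hD hvD t ht x k).trans_eq ?_
      rw [Nat.factorial_succ]
      push_cast
      field_simp
      ring
  exact fun t ht x k => nonpos_of_forall_le_mul_pow_div_factorial fun n => hbound n t ht x k

end Comparison

theorem stmt5_general
    (N K : ℕ) (T τ : ℝ) (hT : 0 < T)
    (p : Fin N → ℝ) (hp : ∀ l, 0 < p l)
    (κ : EuclideanSpace ℝ (Fin N) → ℝ)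
    (hκC : ContDiff ℝ 1 κ) (hκsupp : HasCompactSupport κ)
    (hκnn : ∀ z, 0 ≤ κ z)
    (hκint : ∫ z, κ z = 1)
    (A : ℝ → EuclideanSpace ℝ (Fin N) → Matrix (Fin K) (Fin K) ℝ)
    (hAcont : ∀ k j, Continuous (fun q : ℝ × EuclideanSpace ℝ (Fin N) => A q.1 q.2 k j))
    (hAper : ∀ t x, A (t + T) x = A t x)
    (hAsper : ∀ t x l, A t (x + EuclideanSpace.single l (p l)) = A t x)
    (hAcoop : ∀ t x, ∀ k j : Fin K, k ≠ j → 0 ≤ A t x k j)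
    (uP uM duP duM : ℝ → EuclideanSpace ℝ (Fin N) → Fin K → ℝ)
    -- `u⁺`, `u⁻` are bounded on `[0,τ) × ℝ^N`
    (hbdd : ∃ M : ℝ, ∀ t ∈ Ico (0:ℝ) τ, ∀ x, ∀ k,
      |uP t x k| ≤ M ∧ |uM t x k| ≤ M)
    -- `u⁺`, `u⁻` are continuous on `[0,τ) × ℝ^N`
    (hcontP : ContinuousOn (fun q : ℝ × EuclideanSpace ℝ (Fin N) => uP q.1 q.2)
      (Ico 0 τ ×ˢ univ))
    (hcontM : ContinuousOn (fun q : ℝ × EuclideanSpace ℝ (Fin N) => uM q.1 q.2)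
      (Ico 0 τ ×ˢ univ))
    -- `u⁺`, `u⁻` are continuously differentiable in `t`, with derivatives `du⁺`, `du⁻`
    (hdP : ∀ x, ∀ t ∈ Ico (0:ℝ) τ, ∀ k,
      HasDerivWithinAt (fun s => uP s x k) (duP t x k) (Ico 0 τ) t)
    (hdM : ∀ x, ∀ t ∈ Ico (0:ℝ) τ, ∀ k,
      HasDerivWithinAt (fun s => uM s x k) (duM t x k) (Ico 0 τ) t)
    -- supersolution inequality
    (hsuper : ∀ t ∈ Ico (0:ℝ) τ, ∀ x, ∀ k,
      (∫ y, κ (y - x) * (uP t y k - uP t x k)) + ∑ j, A t x k j * uP t x j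
        ≤ duP t x k)
    -- subsolution inequality
    (hsub : ∀ t ∈ Ico (0:ℝ) τ, ∀ x, ∀ k,
      duM t x k ≤ (∫ y, κ (y - x) * (uM t y k - uM t x k))
        + ∑ j, A t x k j * uM t x j)
    -- ordering at time 0
    (hinit : ∀ x, ∀ k, uM 0 x k ≤ uP 0 x k) :
    ∀ t ∈ Ico (0:ℝ) τ, ∀ x, ∀ k, uM t x k ≤ uP t x k := by
  obtain ⟨C, hC⟩ := exists_norm_le_of_periodic hT hp (f := fun t x k j => A t x k j)
    (continuous_pi fun k => continuous_pi fun j => hAcont k j)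
    (fun t x => by simp only [hAper]) (fun t x l => by simp only [hAsper])
  have hAC : ∀ t x k j, |A t x k j| ≤ C := fun t x k j =>
    ((norm_le_pi_norm (fun j => A t x k j) j).trans
      (norm_le_pi_norm (fun k j => A t x k j) k)).trans (hC t x)
  obtain ⟨M, hM⟩ := hbdd
  intro t ht x k
  have hdiff := nonpos_of_cooperative_subsolution hκC.continuous hκsupp hκnn hκint
    ((norm_nonneg _).trans (hC 0 0)) hAC hAcoop (M := 2 * M)
    (v := fun t y k => uM t y k - uP t y k) (dv := fun t y k => duM t y k - duP t y k)
    (fun s hs y j => by linarith [abs_le.mp (hM s hs y j).1, abs_le.mp (hM s hs y j).2])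
    (fun s hs j => (hcontM.continuous_apply_of_prod_univ hs j).sub
      (hcontP.continuous_apply_of_prod_univ hs j))
    (fun y s hs j => (hdM y s hs j).sub (hdP y s hs j))
    (fun s hs y j => sub_le_integral_kernel_add_sum hκC.continuous hκsupp
      (hcontM.continuous_apply_of_prod_univ hs j) (hcontP.continuous_apply_of_prod_univ hs j)
      (hsub s hs y j) (hsuper s hs y j))
    (fun y j => sub_nonpos.mpr (hinit y j)) t ht x k
  exact sub_nonpos.mp hdiff

/-- Comparison principle for the time and space periodic
cooperative nonlocal dispersal system on `ℝ^N`: a bounded subsolution that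
starts below a bounded supersolution stays below it on `[0,τ) × ℝ^N`. -/
theorem stmt5
    (N K : ℕ) (hN : 1 ≤ N) (hK : 2 ≤ K) (T τ : ℝ) (hT : 0 < T) (hτ : 0 < τ)
    (p : Fin N → ℝ) (hp : ∀ l, 0 < p l)
    (κ : EuclideanSpace ℝ (Fin N) → ℝ)
    (hκC : ContDiff ℝ 1 κ) (hκsupp : HasCompactSupport κ)
    (hκnn : ∀ z, 0 ≤ κ z) (hκ0 : 0 < κ 0)
    (hκint : ∫ z, κ z = 1)
    (A : ℝ → EuclideanSpace ℝ (Fin N) → Matrix (Fin K) (Fin K) ℝ)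
    (hAcont : ∀ k j, Continuous (fun q : ℝ × EuclideanSpace ℝ (Fin N) => A q.1 q.2 k j))
    (hAper : ∀ t x, A (t + T) x = A t x)
    (hAsper : ∀ t x l, A t (x + EuclideanSpace.single l (p l)) = A t x)
    (hAcoop : ∀ t x, ∀ k j : Fin K, k ≠ j → 0 ≤ A t x k j)
    (hAirr : ∀ S : Set (Fin K), S.Nonempty → Sᶜ.Nonempty → ∀ t x,
      ∃ k ∈ S, ∃ j ∈ Sᶜ, A t x k j ≠ 0)
    (uP uM duP duM : ℝ → EuclideanSpace ℝ (Fin N) → Fin K → ℝ)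
    -- `u⁺`, `u⁻` are bounded on `[0,τ) × ℝ^N`
    (hbdd : ∃ M : ℝ, ∀ t ∈ Ico (0:ℝ) τ, ∀ x, ∀ k,
      |uP t x k| ≤ M ∧ |uM t x k| ≤ M)
    -- `u⁺`, `u⁻` are continuous on `[0,τ) × ℝ^N`
    (hcontP : ContinuousOn (fun q : ℝ × EuclideanSpace ℝ (Fin N) => uP q.1 q.2)
      (Ico 0 τ ×ˢ univ))
    (hcontM : ContinuousOn (fun q : ℝ × EuclideanSpace ℝ (Fin N) => uM q.1 q.2)
      (Ico 0 τ ×ˢ univ))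
    -- `u⁺`, `u⁻` are continuously differentiable in `t`, with derivatives `du⁺`, `du⁻`
    (hdP : ∀ x, ∀ t ∈ Ico (0:ℝ) τ, ∀ k,
      HasDerivWithinAt (fun s => uP s x k) (duP t x k) (Ico 0 τ) t)
    (hdM : ∀ x, ∀ t ∈ Ico (0:ℝ) τ, ∀ k,
      HasDerivWithinAt (fun s => uM s x k) (duM t x k) (Ico 0 τ) t)
    (hdcP : ∀ x k, ContinuousOn (fun t => duP t x k) (Ico 0 τ))
    (hdcM : ∀ x k, ContinuousOn (fun t => duM t x k) (Ico 0 τ))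
    -- supersolution inequality
    (hsuper : ∀ t ∈ Ico (0:ℝ) τ, ∀ x, ∀ k,
      (∫ y, κ (y - x) * (uP t y k - uP t x k)) + ∑ j, A t x k j * uP t x j
        ≤ duP t x k)
    -- subsolution inequality
    (hsub : ∀ t ∈ Ico (0:ℝ) τ, ∀ x, ∀ k,
      duM t x k ≤ (∫ y, κ (y - x) * (uM t y k - uM t x k))
        + ∑ j, A t x k j * uM t x j)
    -- ordering at time 0
    (hinit : ∀ x, ∀ k, uM 0 x k ≤ uP 0 x k) :
    ∀ t ∈ Ico (0:ℝ) τ, ∀ x, ∀ k, uM t x k ≤ uP t x k :=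
  stmt5_general N K T τ hT p hp κ hκC hκsupp hκnn hκint A hAcont hAper hAsper hAcoop uP uM duP duM
    hbdd hcontP hcontM hdP hdM hsuper hsub hinit
end

section
/- For every x₀ ∈ D̄ the following unique solvability statement FAILS: for every continuous T-periodic w : ℝ × D̄ → ℝ^K there exists a unique continuous function u : ℝ × D̄ → ℝ^K, continuously differentiable in t and T-periodic in t, satisfying −∂_t u(t,x) − u(t,x) + A(t,x) u(t,x) − h₁(x₀) u(t,x) = w(t,x) for all (t,x) ∈ ℝ × D̄. (That is, each value h₁(x₀), x₀ ∈ D̄, belongs to the spectrum of the operator −∂_t + 𝒜₁, where (𝒜₁u)(t,x) = −u(t,x) + A(t,x)u(t,x).) -/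
open MeasureTheory Set

/-- `u` is a continuous, `C¹`-in-`t`, `T`-periodic-in-`t` solution on
`ℝ × D̄` of `−∂_t u − u + A u − c u = w`. -/
def IsPerSol16 (N K : ℕ) (T : ℝ) (D : Set (EuclideanSpace ℝ (Fin N)))
    (A : ℝ → EuclideanSpace ℝ (Fin N) → Matrix (Fin K) (Fin K) ℝ) (c : ℝ)
    (w u : ℝ → EuclideanSpace ℝ (Fin N) → Fin K → ℝ) : Prop :=
  ContinuousOn (fun q : ℝ × EuclideanSpace ℝ (Fin N) => u q.1 q.2)
    (Set.univ ×ˢ closure D) ∧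
  (∀ x ∈ closure D, ∀ k, ContDiff ℝ 1 fun t => u t x k) ∧
  (∀ t, ∀ x ∈ closure D, u (t + T) x = u t x) ∧
  ∀ t, ∀ x ∈ closure D, ∀ k,
    -(deriv (fun s => u s x k) t) - u t x k + (∑ j, A t x k j * u t x j)
      - c * u t x k = w t x k

/-- For every `x₀ ∈ D̄`, unique solvability of
`−∂_t u − u + A u − h₁(x₀) u = w` in continuous `T`-periodic functions fails;
i.e. every value `h₁(x₀) = −1 + λ₁(x₀)` lies in the spectrum of
`−∂_t + 𝒜₁`. -/
theorem stmt16
    (N K : ℕ) (hN : 1 ≤ N) (hK : 2 ≤ K) (T : ℝ) (hT : 0 < T)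
    (D : Set (EuclideanSpace ℝ (Fin N)))
    (hDo : IsOpen D) (hDb : Bornology.IsBounded D) (hDne : D.Nonempty)
    (A : ℝ → EuclideanSpace ℝ (Fin N) → Matrix (Fin K) (Fin K) ℝ)
    (hAcont : ∀ k j, ContinuousOn (fun q : ℝ × EuclideanSpace ℝ (Fin N) => A q.1 q.2 k j)
      (univ ×ˢ closure D))
    (hAper : ∀ t x, A (t + T) x = A t x)
    (hAcoop : ∀ t, ∀ x ∈ closure D, ∀ k j : Fin K, k ≠ j → 0 ≤ A t x k j)
    (hAirr : ∀ S : Set (Fin K), S.Nonempty → Sᶜ.Nonempty → ∀ t, ∀ x ∈ closure D,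
      ∃ k ∈ S, ∃ j ∈ Sᶜ, A t x k j ≠ 0)
    -- `λ₁(x)`: the principal eigenvalue of `−φ′ + A(t,x)φ = λφ`, `φ(t+T) = φ(t)`
    (lam1 : EuclideanSpace ℝ (Fin N) → ℝ)
    (hlam1 : ∀ x ∈ closure D, ∃ φ : ℝ → Fin K → ℝ, ContDiff ℝ 1 φ ∧
      (∀ t, φ (t + T) = φ t) ∧ (∀ t k, 0 < φ t k) ∧
      ∀ t k, -(deriv φ t k) + ∑ j, A t x k j * φ t j = lam1 x * φ t k) :
    ∀ x₀ ∈ closure D,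
      ¬ (∀ w : ℝ → EuclideanSpace ℝ (Fin N) → Fin K → ℝ,
        ContinuousOn (fun q : ℝ × EuclideanSpace ℝ (Fin N) => w q.1 q.2)
          (univ ×ˢ closure D) →
        (∀ t, ∀ x ∈ closure D, w (t + T) x = w t x) →
        ((∃ u, IsPerSol16 N K T D A (-1 + lam1 x₀) w u) ∧
          ∀ u₁ u₂, IsPerSol16 N K T D A (-1 + lam1 x₀) w u₁ →
            IsPerSol16 N K T D A (-1 + lam1 x₀) w u₂ →
            ∀ t, ∀ x ∈ closure D, u₁ t x = u₂ t x)) := by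
  intro x₀ hx₀ hcon
  obtain ⟨φ, hφC, hφper, hφpos, hφeq⟩ := hlam1 x₀ hx₀
  -- component regularity of φ
  have hφkC : ∀ k, ContDiff ℝ 1 (fun t => φ t k) := fun k => contDiff_pi.mp hφC k
  have hφderiv : ∀ t k, deriv φ t k = deriv (fun s => φ s k) t := by
    intro t k
    have h1 : HasDerivAt φ (deriv φ t) t := (hφC.differentiable one_ne_zero t).hasDerivAt
    exact ((hasDerivAt_pi.mp h1) k).deriv.symm
  -- the right-hand side w
  set w : ℝ → EuclideanSpace ℝ (Fin N) → Fin K → ℝ := fun t _ k => φ t k with hw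
  have hwcont : ContinuousOn (fun q : ℝ × EuclideanSpace ℝ (Fin N) => w q.1 q.2)
      (univ ×ˢ closure D) :=
    ((hφC.continuous).comp continuous_fst).continuousOn
  have hwper : ∀ t, ∀ x ∈ closure D, w (t + T) x = w t x := by
    intro t x _; simp [hw, hφper t]
  obtain ⟨⟨u, huC, huD, huP, huEq⟩, -⟩ := hcon w hwcont hwper
  -- the maximum of u/φ over [0,T] × Fin K
  have hKne : (Finset.univ : Finset (Fin K)).Nonempty := ⟨⟨0, by omega⟩, Finset.mem_univ _⟩
  have hIcc : (Set.Icc (0:ℝ) T).Nonempty := ⟨0, le_refl 0, le_of_lt hT⟩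
  have hmaxk : ∀ k : Fin K, ∃ t₀ ∈ Set.Icc (0:ℝ) T, ∀ t ∈ Set.Icc (0:ℝ) T,
      u t x₀ k / φ t k ≤ u t₀ x₀ k / φ t₀ k := by
    intro k
    have hc : ContinuousOn (fun t => u t x₀ k / φ t k) (Set.Icc 0 T) := by
      apply ContinuousOn.div
      · exact ((huD x₀ hx₀ k).continuous).continuousOn
      · exact ((hφkC k).continuous).continuousOn
      · intro t _; exact ne_of_gt (hφpos t k)
    obtain ⟨t₀, ht₀, hmax⟩ := isCompact_Icc.exists_isMaxOn hIcc hc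
    exact ⟨t₀, ht₀, fun t ht => hmax ht⟩
  choose tk htk hmaxk using hmaxk
  obtain ⟨k₀, -, hk₀⟩ := Finset.exists_max_image Finset.univ
    (fun k => u (tk k) x₀ k / φ (tk k) k) hKne
  set t₀ := tk k₀ with ht₀def
  set s := u t₀ x₀ k₀ / φ t₀ k₀ with hs
  -- z t k := s * φ t k - u t x₀ k ≥ 0 everywhere
  have hzIcc : ∀ t ∈ Set.Icc (0:ℝ) T, ∀ k, u t x₀ k ≤ s * φ t k := by
    intro t ht k
    have h1 : u t x₀ k / φ t k ≤ s :=
      le_trans (hmaxk k t ht) (hk₀ k (Finset.mem_univ k))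
    have := (div_le_iff₀ (hφpos t k)).mp h1
    linarith [this]
  have hzper : ∀ k, Function.Periodic (fun t => s * φ t k - u t x₀ k) T := by
    intro k t
    simp only [hφper t, huP t x₀ hx₀]
  have hznn : ∀ t k, 0 ≤ s * φ t k - u t x₀ k := by
    intro t k
    obtain ⟨y, hy, hxy⟩ := (hzper k).exists_mem_Ico₀ hT t
    rw [hxy]
    have := hzIcc y ⟨hy.1, le_of_lt hy.2⟩ k
    linarith
  -- z k₀ vanishes at t₀
  have hz0 : s * φ t₀ k₀ - u t₀ x₀ k₀ = 0 := by
    rw [hs, div_mul_cancel₀ _ (ne_of_gt (hφpos t₀ k₀)), sub_self]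
  -- t₀ is a global (hence local) minimum of z k₀
  have hmin : IsLocalMin (fun t => s * φ t k₀ - u t x₀ k₀) t₀ := by
    apply Filter.Eventually.of_forall
    intro t
    show s * φ t₀ k₀ - u t₀ x₀ k₀ ≤ s * φ t k₀ - u t x₀ k₀
    rw [hz0]
    exact hznn t k₀
  have hdφ : DifferentiableAt ℝ (fun t => φ t k₀) t₀ :=
    ((hφkC k₀).differentiable one_ne_zero) t₀
  have hdu : DifferentiableAt ℝ (fun t => u t x₀ k₀) t₀ :=
    ((huD x₀ hx₀ k₀).differentiable one_ne_zero) t₀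
  have hzderiv : deriv (fun t => s * φ t k₀ - u t x₀ k₀) t₀
      = s * deriv (fun t => φ t k₀) t₀ - deriv (fun t => u t x₀ k₀) t₀ := by
    rw [deriv_fun_sub ((hdφ.const_mul s)) hdu, deriv_const_mul s hdφ]
  have hz' : s * deriv (fun t => φ t k₀) t₀ - deriv (fun t => u t x₀ k₀) t₀ = 0 := by
    rw [← hzderiv]; exact hmin.deriv_eq_zero
  -- combine the two equations at (t₀, x₀, k₀)
  have hEu := huEq t₀ x₀ hx₀ k₀
  have hEφ := hφeq t₀ k₀
  rw [hφderiv t₀ k₀] at hEφ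
  -- sum identity
  have hsum : ∑ j, A t₀ x₀ k₀ j * (s * φ t₀ j - u t₀ x₀ j)
      = s * (∑ j, A t₀ x₀ k₀ j * φ t₀ j) - ∑ j, A t₀ x₀ k₀ j * u t₀ x₀ j := by
    rw [Finset.mul_sum, ← Finset.sum_sub_distrib]
    congr 1; funext j; ring
  have hsum_nonneg : 0 ≤ ∑ j, A t₀ x₀ k₀ j * (s * φ t₀ j - u t₀ x₀ j) := by
    apply Finset.sum_nonneg
    intro j _
    rcases eq_or_ne j k₀ with rfl | hj
    · rw [hz0]; ring_nf; exact le_refl 0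
    · exact mul_nonneg (hAcoop t₀ x₀ hx₀ k₀ j (Ne.symm hj)) (hznn t₀ j)
  have hφp := hφpos t₀ k₀
  -- compute: the sum equals -φ t₀ k₀ < 0
  have final : ∑ j, A t₀ x₀ k₀ j * (s * φ t₀ j - u t₀ x₀ j) = -(φ t₀ k₀) := by
    rw [hsum]
    have h1 : ∑ j, A t₀ x₀ k₀ j * φ t₀ j
        = lam1 x₀ * φ t₀ k₀ + deriv (fun t => φ t k₀) t₀ := by linarith
    have h2 : ∑ j, A t₀ x₀ k₀ j * u t₀ x₀ j
        = φ t₀ k₀ + deriv (fun t => u t x₀ k₀) t₀ + u t₀ x₀ k₀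
          + (-1 + lam1 x₀) * u t₀ x₀ k₀ := by
      simp only [hw] at hEu; linarith
    rw [h1, h2]
    have hzk : s * φ t₀ k₀ = u t₀ x₀ k₀ := by linarith [hz0]
    linear_combination lam1 x₀ * hzk + hz'
  rw [final] at hsum_nonneg
  linarith
end

section
/- Let α ∈ ℝ with α > max_{x ∈ D̄} h₁(x), and let 𝒳₁ denote the Banach space of continuous functions u : ℝ × D̄ → ℝ^K with u(t+T,x) = u(t,x), equipped with the supremum norm. Suppose R : 𝒳₁ → 𝒳₁ is a bounded linear operator such that for every w ∈ 𝒳₁ the function Rw is continuously differentiable in t and satisfies α (Rw)(t,x) + ∂_t (Rw)(t,x) + (Rw)(t,x) − A(t,x)(Rw)(t,x) = w(t,x) for all (t,x) ∈ ℝ × D̄. Then the bounded linear operator 𝒳₁ → 𝒳₁ given by w ↦ ((t,x) ↦ ∫_D κ(y−x)(Rw)(t,y) dy) is a compact operator. -/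
open MeasureTheory Set
open scoped Classical

noncomputable section

/-- The space `𝒳₁` of continuous `T`-periodic (in time) functions
`ℝ × D̄ → ℝ^K`, realized as the submodule of periodic elements of the bounded
continuous functions (on `ℝ × D̄` with `D̄` compact, continuous periodic
functions are exactly the bounded continuous periodic ones), with the
supremum norm. -/
def PeriodicSubmodule (N K : ℕ) (T : ℝ) (D : Set (EuclideanSpace ℝ (Fin N))) :
    Submodule ℝ (BoundedContinuousFunction (ℝ × ↥(closure D)) (Fin K → ℝ)) where
  carrier := {u | ∀ t x, u (t + T, x) = u (t, x)}
  add_mem' := by intro a b ha hb t x; simp [ha t x, hb t x]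
  zero_mem' := by intro t x; simp
  smul_mem' := by intro c a ha t x; simp [ha t x]

/-- The Banach space `𝒳₁`. -/
def X1 (N K : ℕ) (T : ℝ) (D : Set (EuclideanSpace ℝ (Fin N))) : Type :=
  ↥(PeriodicSubmodule N K T D)

noncomputable instance (N K : ℕ) (T : ℝ) (D : Set (EuclideanSpace ℝ (Fin N))) :
    NormedAddCommGroup (X1 N K T D) :=
  inferInstanceAs (NormedAddCommGroup ↥(PeriodicSubmodule N K T D))

noncomputable instance (N K : ℕ) (T : ℝ) (D : Set (EuclideanSpace ℝ (Fin N))) :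
    NormedSpace ℝ (X1 N K T D) :=
  inferInstanceAs (NormedSpace ℝ ↥(PeriodicSubmodule N K T D))

/-- Evaluation of an element of `𝒳₁` at a point `(t, x) ∈ ℝ × D̄`. -/
def X1.app {N K : ℕ} {T : ℝ} {D : Set (EuclideanSpace ℝ (Fin N))}
    (u : X1 N K T D) (t : ℝ) (x : ↥(closure D)) : Fin K → ℝ :=
  ((show ↥(PeriodicSubmodule N K T D) from u) : BoundedContinuousFunction _ _) (t, x)

/-! ### Auxiliary material -/

lemma periodic_exists_Icc {β : Type*} {T : ℝ} (hT : 0 < T) (f : ℝ → β)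
    (hf : ∀ t, f (t + T) = f t) (t : ℝ) : ∃ t₀ ∈ Set.Icc (0:ℝ) T, f t = f t₀ := by
  refine ⟨t - ⌊t / T⌋ * T,
    ⟨Int.sub_floor_div_mul_nonneg t hT, (Int.sub_floor_div_mul_lt t hT).le⟩, ?_⟩
  exact (Function.Periodic.sub_int_mul_eq (hf : Function.Periodic f T) _).symm

lemma totallyBounded_of_image' {X Y : Type*} [PseudoMetricSpace X] [PseudoMetricSpace Y]
    {f : X → Y} {s : Set X} (h : ∀ a ∈ s, ∀ b ∈ s, dist a b ≤ dist (f a) (f b))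
    (htb : TotallyBounded (f '' s)) : TotallyBounded s := by
  rw [Metric.totallyBounded_iff]
  intro ε hε
  obtain ⟨t, hts, htf, hcov⟩ := Metric.finite_approx_of_totallyBounded htb ε hε
  have hch : ∀ y : t, ∃ a, a ∈ s ∧ f a = (y : Y) := fun y => hts y.2
  choose g hg hgf using hch
  haveI := htf.to_subtype
  refine ⟨Set.range g, Set.finite_range g, fun x hx => ?_⟩
  obtain ⟨y, hy, hxy⟩ := Set.mem_iUnion₂.1 (hcov (Set.mem_image_of_mem f hx))
  refine Set.mem_iUnion₂.2 ⟨g ⟨y, hy⟩, Set.mem_range_self _, ?_⟩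
  rw [Metric.mem_ball]
  calc dist x (g ⟨y, hy⟩) ≤ dist (f x) (f (g ⟨y, hy⟩)) := h x hx _ (hg ⟨y, hy⟩)
    _ = dist (f x) ↑y := by rw [hgf]
    _ < ε := Metric.mem_ball.1 hxy

/-- The underlying bounded continuous function of an element of `𝒳₁`. -/
def X1.toBCF {N K : ℕ} {T : ℝ} {D : Set (EuclideanSpace ℝ (Fin N))} (u : X1 N K T D) :
    BoundedContinuousFunction (ℝ × ↥(closure D)) (Fin K → ℝ) :=
  ((show ↥(PeriodicSubmodule N K T D) from u) : BoundedContinuousFunction _ _)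

lemma X1.app_eq {N K : ℕ} {T : ℝ} {D : Set (EuclideanSpace ℝ (Fin N))} (u : X1 N K T D)
    (t : ℝ) (x : ↥(closure D)) : u.app t x = u.toBCF (t, x) := rfl

lemma X1.norm_toBCF {N K : ℕ} {T : ℝ} {D : Set (EuclideanSpace ℝ (Fin N))} (u : X1 N K T D) :
    ‖u.toBCF‖ = ‖u‖ := rfl

lemma X1.periodic {N K : ℕ} {T : ℝ} {D : Set (EuclideanSpace ℝ (Fin N))} (u : X1 N K T D) :
    ∀ t x, u.toBCF (t + T, x) = u.toBCF (t, x) :=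
  (show ↥(PeriodicSubmodule N K T D) from u).2

lemma X1.isometry_toBCF {N K : ℕ} {T : ℝ} {D : Set (EuclideanSpace ℝ (Fin N))} :
    Isometry (X1.toBCF (N := N) (K := K) (T := T) (D := D)) :=
  Isometry.of_dist_eq fun _ _ => rfl

lemma X1.range_toBCF {N K : ℕ} {T : ℝ} {D : Set (EuclideanSpace ℝ (Fin N))} :
    Set.range (X1.toBCF (N := N) (K := K) (T := T) (D := D))
      = (PeriodicSubmodule N K T D : Set _) := by
  ext f
  constructor
  · rintro ⟨u, rfl⟩
    exact (show ↥(PeriodicSubmodule N K T D) from u).2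
  · intro hf
    exact ⟨(⟨f, hf⟩ : ↥(PeriodicSubmodule N K T D)), rfl⟩

lemma X1.norm_app_le {N K : ℕ} {T : ℝ} {D : Set (EuclideanSpace ℝ (Fin N))} (u : X1 N K T D)
    (t : ℝ) (x : ↥(closure D)) : ‖u.app t x‖ ≤ ‖u‖ :=
  BoundedContinuousFunction.norm_coe_le_norm u.toBCF (t, x)

lemma periodicSubmodule_isClosed (N K : ℕ) (T : ℝ) (D : Set (EuclideanSpace ℝ (Fin N))) :
    IsClosed (PeriodicSubmodule N K T D :
      Set (BoundedContinuousFunction (ℝ × ↥(closure D)) (Fin K → ℝ))) := by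
  have h : (PeriodicSubmodule N K T D : Set _)
      = ⋂ (t : ℝ), ⋂ (x : ↥(closure D)),
        {f : BoundedContinuousFunction (ℝ × ↥(closure D)) (Fin K → ℝ) |
          f (t + T, x) = f (t, x)} := by
    ext f
    simp only [SetLike.mem_coe, Set.mem_iInter, Set.mem_setOf_eq]
    exact Iff.rfl
  rw [h]
  exact isClosed_iInter fun t => isClosed_iInter fun x =>
    isClosed_eq ((BoundedContinuousFunction.lipschitz_eval_const _).continuous)
      ((BoundedContinuousFunction.lipschitz_eval_const _).continuous)

/-- If `R : 𝒳₁ → 𝒳₁` is a bounded linear operator inverting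
`αI + ∂_t − 𝒜₁` (with `α > max_{x ∈ D̄} h₁(x)`), then the operator
`𝒦₁ R : w ↦ ∫_D κ(y − x)(Rw)(t,y) dy` on `𝒳₁` is compact. -/
theorem stmt18
    (N K : ℕ) (hN : 1 ≤ N) (hK : 2 ≤ K) (T : ℝ) (hT : 0 < T)
    (D : Set (EuclideanSpace ℝ (Fin N)))
    (hDo : IsOpen D) (hDb : Bornology.IsBounded D) (hDne : D.Nonempty)
    (κ : EuclideanSpace ℝ (Fin N) → ℝ)
    (hκC : ContDiff ℝ 1 κ) (hκsupp : HasCompactSupport κ)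
    (hκnn : ∀ z, 0 ≤ κ z) (hκ0 : 0 < κ 0)
    (hκint : ∫ z, κ z = 1)
    (A : ℝ → EuclideanSpace ℝ (Fin N) → Matrix (Fin K) (Fin K) ℝ)
    (hAcont : ∀ k j, ContinuousOn (fun q : ℝ × EuclideanSpace ℝ (Fin N) => A q.1 q.2 k j)
      (univ ×ˢ closure D))
    (hAper : ∀ t x, A (t + T) x = A t x)
    (hAcoop : ∀ t, ∀ x ∈ closure D, ∀ k j : Fin K, k ≠ j → 0 ≤ A t x k j)
    (hAirr : ∀ S : Set (Fin K), S.Nonempty → Sᶜ.Nonempty → ∀ t, ∀ x ∈ closure D,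
      ∃ k ∈ S, ∃ j ∈ Sᶜ, A t x k j ≠ 0)
    -- `λ₁(x)`: the principal eigenvalue of `−φ′ + A(t,x)φ = λφ`, `φ(t+T) = φ(t)`
    (lam1 : EuclideanSpace ℝ (Fin N) → ℝ)
    (hlam1 : ∀ x ∈ closure D, ∃ φ : ℝ → Fin K → ℝ, ContDiff ℝ 1 φ ∧
      (∀ t, φ (t + T) = φ t) ∧ (∀ t k, 0 < φ t k) ∧
      ∀ t k, -(deriv φ t k) + ∑ j, A t x k j * φ t j = lam1 x * φ t k)
    -- `α > max_{x ∈ D̄} h₁(x)` where `h₁(x) = −1 + λ₁(x)`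
    (α : ℝ) (hα : ∀ x ∈ closure D, -1 + lam1 x < α)
    -- `R` is a bounded linear operator on `𝒳₁` with
    -- `(αI + ∂_t − 𝒜₁)(Rw) = w` for all `w ∈ 𝒳₁`
    (R : X1 N K T D →L[ℝ] X1 N K T D)
    (hR : ∀ w : X1 N K T D,
      (∀ (x : ↥(closure D)) (k : Fin K), ContDiff ℝ 1 fun s => (R w).app s x k) ∧
      ∀ (t : ℝ) (x : ↥(closure D)) (k : Fin K),
        α * (R w).app t x k + deriv (fun s => (R w).app s x k) t + (R w).app t x k
          - (∑ j, A t (↑x) k j * (R w).app t x j) = w.app t x k)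
    -- `KR` is the linear operator `w ↦ ((t,x) ↦ ∫_D κ(y − x)(Rw)(t,y) dy)`
    (KR : X1 N K T D →ₗ[ℝ] X1 N K T D)
    (hKR : ∀ (w : X1 N K T D) (t : ℝ) (x : ↥(closure D)),
      (KR w).app t x = ∫ y in D, κ (y - ↑x) •
        (if h : y ∈ closure D then (R w).app t ⟨y, h⟩ else 0)) :
    IsCompactOperator ⇑KR := by
  -- Basic facts about the domain
  have hDcc : IsCompact (closure D) := hDb.isCompact_closure
  have hDmeas : MeasurableSet D := hDo.measurableSet
  have hvol : volume D < ⊤ := hDb.measure_lt_top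
  set V : ℝ := (volume D).toReal with hVdef
  have hV0 : 0 ≤ V := ENNReal.toReal_nonneg
  -- Bound for κ
  obtain ⟨Mk, hMk⟩ := hκsupp.exists_bound_of_continuous hκC.continuous
  have hMk0 : (0:ℝ) ≤ Mk := le_trans (norm_nonneg _) (hMk 0)
  -- Lipschitz constant for κ
  obtain ⟨Lk, hLk⟩ := ContDiff.lipschitzWith_of_hasCompactSupport hκsupp hκC one_ne_zero
  -- Bound for A on ℝ × D̄
  have hA2 : ContinuousOn
      (fun q : ℝ × EuclideanSpace ℝ (Fin N) => (fun k j => A q.1 q.2 k j : Fin K → Fin K → ℝ))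
      ((Set.Icc (0:ℝ) T) ×ˢ closure D) := by
    apply continuousOn_pi.2; intro k; apply continuousOn_pi.2; intro j
    exact (hAcont k j).mono (Set.prod_mono (Set.subset_univ _) subset_rfl)
  obtain ⟨MA, hMA⟩ := (isCompact_Icc.prod hDcc).exists_bound_of_continuousOn hA2
  set MA' : ℝ := max MA 0 with hMA'def
  have hMA0 : (0:ℝ) ≤ MA' := le_max_right _ _
  have hMAbound : ∀ (t : ℝ), ∀ x ∈ closure D, ∀ k j : Fin K, |A t x k j| ≤ MA' := by
    intro t x hx k j
    obtain ⟨t₀, ht₀, hval⟩ := periodic_exists_Icc hT (fun s => A s x k j)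
      (fun s => by simp only [hAper s x]) t
    calc |A t x k j| = |A t₀ x k j| := by rw [hval]
      _ ≤ ‖(fun j' => A t₀ x k j' : Fin K → ℝ)‖ := norm_le_pi_norm (fun j' => A t₀ x k j') j
      _ ≤ ‖(fun k' j' => A t₀ x k' j' : Fin K → Fin K → ℝ)‖ :=
          norm_le_pi_norm (fun k' j' => A t₀ x k' j') k
      _ ≤ MA := hMA (t₀, x) (Set.mem_prod.2 ⟨ht₀, hx⟩)
      _ ≤ MA' := le_max_left _ _
  -- Operator norm bound
  set B : ℝ := ‖R‖ with hBdef
  have hBnn : (0:ℝ) ≤ B := norm_nonneg _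
  -- Derivative bound constant
  set Cd : ℝ := 1 + (|α| + 1) * B + (K : ℝ) * (MA' * B) with hCddef
  have hCd : (0:ℝ) ≤ Cd := by
    have h1 : (0:ℝ) ≤ (|α| + 1) * B := mul_nonneg (by positivity) hBnn
    have h2 : (0:ℝ) ≤ (K : ℝ) * (MA' * B) := mul_nonneg (by positivity) (mul_nonneg hMA0 hBnn)
    linarith
  -- The key quantitative estimates
  have key : ∀ w : X1 N K T D, ‖w‖ ≤ 1 →
      (∀ (t : ℝ) (x : ↥(closure D)), ‖(KR w).app t x‖ ≤ Mk * B * V) ∧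
      (∀ (t t' : ℝ) (x x' : ↥(closure D)), ‖(KR w).app t x - (KR w).app t' x'‖ ≤
        ((Lk : ℝ) * B * ‖(x : EuclideanSpace ℝ (Fin N)) - ↑x'‖ + Mk * Cd * |t - t'|) * V) := by
    intro w hw
    have hRw : ∀ (t : ℝ) (x : ↥(closure D)), ‖(R w).app t x‖ ≤ B := by
      intro t x
      calc ‖(R w).app t x‖ ≤ ‖R w‖ := X1.norm_app_le _ _ _
        _ ≤ ‖R‖ * ‖w‖ := R.le_opNorm w
        _ ≤ B := mul_le_of_le_one_right hBnn hw
    have hRwk : ∀ (t : ℝ) (x : ↥(closure D)) (k : Fin K), |(R w).app t x k| ≤ B := by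
      intro t x k
      exact le_trans (norm_le_pi_norm ((R w).app t x) k) (hRw t x)
    have hwk : ∀ (t : ℝ) (x : ↥(closure D)) (k : Fin K), |w.app t x k| ≤ 1 := by
      intro t x k
      exact le_trans (le_trans (norm_le_pi_norm (w.app t x) k) (X1.norm_app_le _ _ _)) hw
    -- derivative bound
    have hDerivB : ∀ (t : ℝ) (x : ↥(closure D)) (k : Fin K),
        |deriv (fun s => (R w).app s x k) t| ≤ Cd := by
      intro t x k
      have heq := (hR w).2 t x k
      have hsum : |∑ j, A t (↑x) k j * (R w).app t x j| ≤ (K : ℝ) * (MA' * B) := by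
        calc |∑ j, A t (↑x) k j * (R w).app t x j|
            ≤ ∑ j, |A t (↑x) k j * (R w).app t x j| := Finset.abs_sum_le_sum_abs _ _
          _ ≤ ∑ _j : Fin K, MA' * B := by
              refine Finset.sum_le_sum fun j _ => ?_
              rw [abs_mul]
              exact mul_le_mul (hMAbound t (↑x) x.2 k j) (hRwk t x j) (abs_nonneg _) hMA0
          _ = (K : ℝ) * (MA' * B) := by
              simp [Finset.sum_const, Finset.card_univ, nsmul_eq_mul]
      have h1 := abs_le.1 (hwk t x k)
      have h2 := abs_le.1 (hRwk t x k)
      have h3 := abs_le.1 hsum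
      have h4 : |α * (R w).app t x k| ≤ |α| * B := by
        rw [abs_mul]
        exact mul_le_mul_of_nonneg_left (hRwk t x k) (abs_nonneg α)
      have h4' := abs_le.1 h4
      rw [abs_le]
      constructor <;> [nlinarith; nlinarith]
    -- Lipschitz in time for R w
    have hLipT : ∀ (x : ↥(closure D)) (t t' : ℝ),
        ‖(R w).app t x - (R w).app t' x‖ ≤ Cd * |t - t'| := by
      intro x t t'
      rw [pi_norm_le_iff_of_nonneg (mul_nonneg hCd (abs_nonneg _))]
      intro k
      have hdiff : ∀ s ∈ (Set.univ : Set ℝ),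
          DifferentiableAt ℝ (fun s => (R w).app s x k) s :=
        fun s _ => ((hR w).1 x k).differentiable one_ne_zero s
      have := Convex.norm_image_sub_le_of_norm_deriv_le hdiff
        (fun s _ => by rw [Real.norm_eq_abs]; exact hDerivB s x k) convex_univ
        (Set.mem_univ t') (Set.mem_univ t)
      simpa [Real.norm_eq_abs] using this
    -- bounds for the dite integrand
    have hgbound : ∀ (t : ℝ) (y : EuclideanSpace ℝ (Fin N)),
        ‖(if h : y ∈ closure D then (R w).app t ⟨y, h⟩ else 0 : Fin K → ℝ)‖ ≤ B := by
      intro t y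
      by_cases h : y ∈ closure D
      · rw [dif_pos h]; exact hRw t ⟨y, h⟩
      · rw [dif_neg h]; simpa using hBnn
    have hglip : ∀ (t t' : ℝ) (y : EuclideanSpace ℝ (Fin N)),
        ‖(if h : y ∈ closure D then (R w).app t ⟨y, h⟩ else 0 : Fin K → ℝ)
          - (if h : y ∈ closure D then (R w).app t' ⟨y, h⟩ else 0)‖ ≤ Cd * |t - t'| := by
      intro t t' y
      by_cases h : y ∈ closure D
      · rw [dif_pos h, dif_pos h]; exact hLipT ⟨y, h⟩ t t'
      · rw [dif_neg h, dif_neg h]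
        simpa using mul_nonneg hCd (abs_nonneg (t - t'))
    -- continuity of the dite integrand on D̄
    have hgcont : ∀ t : ℝ, ContinuousOn
        (fun y => if h : y ∈ closure D then (R w).app t ⟨y, h⟩ else 0) (closure D) := by
      intro t
      rw [continuousOn_iff_continuous_restrict]
      have hres : (closure D).restrict
          (fun y => if h : y ∈ closure D then (R w).app t ⟨y, h⟩ else 0)
          = fun z : ↥(closure D) => (R w).toBCF (t, z) := by
        funext z
        exact dif_pos z.2
      change Continuous ((closure D).restrict
          (fun y => if h : y ∈ closure D then (R w).app t ⟨y, h⟩ else 0))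
      rw [hres]
      exact (R w).toBCF.continuous.comp (continuous_const.prodMk continuous_id)
    -- integrability of the full integrand
    have hintg : ∀ (t : ℝ) (x : ↥(closure D)), IntegrableOn
        (fun y => κ (y - ↑x) • (if h : y ∈ closure D then (R w).app t ⟨y, h⟩ else 0))
        D volume := by
      intro t x
      have hcont : ContinuousOn
          (fun y => κ (y - (↑x : EuclideanSpace ℝ (Fin N))) •
            (if h : y ∈ closure D then (R w).app t ⟨y, h⟩ else 0)) D :=
        ((hκC.continuous.comp (continuous_id.sub continuous_const)).continuousOn).smul
          ((hgcont t).mono subset_closure)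
      refine ⟨hcont.aestronglyMeasurable hDmeas,
        HasFiniteIntegral.restrict_of_bounded (C := Mk * B) hvol ?_⟩
      refine Filter.Eventually.of_forall fun y => ?_
      rw [norm_smul]
      exact mul_le_mul (hMk _) (hgbound t y) (norm_nonneg _) hMk0
    constructor
    · -- value bound
      intro t x
      rw [hKR w t x]
      calc ‖∫ y in D, κ (y - ↑x) • (if h : y ∈ closure D then (R w).app t ⟨y, h⟩ else 0)‖
          ≤ (Mk * B) * V := by
            refine norm_setIntegral_le_of_norm_le_const hvol (fun y _ => ?_)
            rw [norm_smul]
            exact mul_le_mul (hMk _) (hgbound t y) (norm_nonneg _) hMk0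
        _ = Mk * B * V := by ring
    · -- modulus of continuity
      intro t t' x x'
      rw [hKR w t x, hKR w t' x', ← integral_sub (hintg t x) (hintg t' x')]
      refine le_trans (norm_setIntegral_le_of_norm_le_const (C := (Lk : ℝ) * B *
          ‖(↑x : EuclideanSpace ℝ (Fin N)) - ↑x'‖ + Mk * Cd * |t - t'|) hvol
          (fun y _ => ?_)) le_rfl
      -- pointwise bound
      set g1 : Fin K → ℝ := if h : y ∈ closure D then (R w).app t ⟨y, h⟩ else 0 with hg1
      set g2 : Fin K → ℝ := if h : y ∈ closure D then (R w).app t' ⟨y, h⟩ else 0 with hg2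
      have hid : κ (y - (↑x : EuclideanSpace ℝ (Fin N))) • g1 - κ (y - ↑x') • g2
          = (κ (y - ↑x) - κ (y - ↑x')) • g1 + κ (y - ↑x') • (g1 - g2) := by
        rw [sub_smul, smul_sub]; abel
      have hklip : |κ (y - (↑x : EuclideanSpace ℝ (Fin N))) - κ (y - ↑x')|
          ≤ (Lk : ℝ) * ‖(↑x : EuclideanSpace ℝ (Fin N)) - ↑x'‖ := by
        have h := hLk.dist_le_mul (y - ↑x) (y - ↑x')
        rw [Real.dist_eq] at h
        refine le_trans h ?_
        have harg : (y - (↑x : EuclideanSpace ℝ (Fin N))) - (y - ↑x') = ↑x' - ↑x := by abel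
        rw [dist_eq_norm, harg, norm_sub_rev]
      calc ‖κ (y - (↑x : EuclideanSpace ℝ (Fin N))) • g1 - κ (y - ↑x') • g2‖
          = ‖(κ (y - ↑x) - κ (y - ↑x')) • g1 + κ (y - ↑x') • (g1 - g2)‖ := by rw [hid]
        _ ≤ ‖(κ (y - (↑x : EuclideanSpace ℝ (Fin N))) - κ (y - ↑x')) • g1‖
            + ‖κ (y - (↑x' : EuclideanSpace ℝ (Fin N))) • (g1 - g2)‖ := norm_add_le _ _
        _ ≤ ((Lk : ℝ) * ‖(↑x : EuclideanSpace ℝ (Fin N)) - ↑x'‖) * B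
            + Mk * (Cd * |t - t'|) := by
            rw [norm_smul, norm_smul]
            refine add_le_add (mul_le_mul hklip (hgbound t y) (norm_nonneg _)
              (mul_nonneg Lk.2 (norm_nonneg _))) (mul_le_mul (hMk _) (hglip t t' y)
              (norm_nonneg _) hMk0)
        _ = (Lk : ℝ) * B * ‖(↑x : EuclideanSpace ℝ (Fin N)) - ↑x'‖ + Mk * Cd * |t - t'| := by
            ring
  -- Arzelà–Ascoli setup
  haveI hc1 : CompactSpace ↥(Set.Icc (0:ℝ) T) := isCompact_iff_compactSpace.mp isCompact_Icc
  haveI hc2 : CompactSpace ↥(closure D) := isCompact_iff_compactSpace.mp hDcc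
  set ι : C(↥(Set.Icc (0:ℝ) T) × ↥(closure D), ℝ × ↥(closure D)) :=
    ⟨fun p => ((p.1 : ℝ), p.2),
      (continuous_subtype_val.comp continuous_fst).prodMk continuous_snd⟩ with hιdef
  set r : BoundedContinuousFunction (ℝ × ↥(closure D)) (Fin K → ℝ) →
      BoundedContinuousFunction (↥(Set.Icc (0:ℝ) T) × ↥(closure D)) (Fin K → ℝ) :=
    fun f => f.compContinuous ι with hrdef
  set S1 : Set (BoundedContinuousFunction (ℝ × ↥(closure D)) (Fin K → ℝ)) :=
    X1.toBCF '' (⇑KR '' Metric.ball 0 1) with hS1def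
  set A₀ := r '' S1 with hA₀def
  have in_s : ∀ (f : BoundedContinuousFunction (↥(Set.Icc (0:ℝ) T) × ↥(closure D)) (Fin K → ℝ))
      (p : ↥(Set.Icc (0:ℝ) T) × ↥(closure D)), f ∈ A₀ →
      f p ∈ Metric.closedBall (0 : Fin K → ℝ) (Mk * B * V) := by
    rintro f p ⟨f', ⟨u, ⟨w, hw, rfl⟩, rfl⟩, rfl⟩
    rw [Metric.mem_closedBall, dist_zero_right]
    exact (key w (mem_ball_zero_iff.mp hw).le).1 ↑p.1 p.2
  have hmod : ∀ (p q : ↥(Set.Icc (0:ℝ) T) × ↥(closure D)) (i : ↥A₀),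
      dist ((i : BoundedContinuousFunction (↥(Set.Icc (0:ℝ) T) × ↥(closure D)) (Fin K → ℝ)) p)
        ((i : BoundedContinuousFunction (↥(Set.Icc (0:ℝ) T) × ↥(closure D)) (Fin K → ℝ)) q)
        ≤ ((Lk : ℝ) * B + Mk * Cd) * V * dist p q := by
    intro p q i
    obtain ⟨f', ⟨u, ⟨w, hw, rfl⟩, rfl⟩, hfi⟩ := i.2
    have hw1 : ‖w‖ ≤ 1 := (mem_ball_zero_iff.mp hw).le
    have h2 := (key w hw1).2 ↑p.1 ↑q.1 p.2 q.2
    have h1' : |(↑p.1 : ℝ) - ↑q.1| ≤ dist p q := by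
      rw [Prod.dist_eq]
      refine le_trans ?_ (le_max_left _ _)
      rw [Subtype.dist_eq, Real.dist_eq]
    have h2' : ‖(↑p.2 : EuclideanSpace ℝ (Fin N)) - ↑q.2‖ ≤ dist p q := by
      rw [Prod.dist_eq]
      refine le_trans ?_ (le_max_right _ _)
      rw [Subtype.dist_eq, dist_eq_norm]
    have hLkB : (0:ℝ) ≤ (Lk : ℝ) * B := mul_nonneg Lk.2 hBnn
    have hMkCd : (0:ℝ) ≤ Mk * Cd := mul_nonneg hMk0 hCd
    have e1 := mul_le_mul_of_nonneg_left h2' hLkB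
    have e2 := mul_le_mul_of_nonneg_left h1' hMkCd
    have e3 : (Lk : ℝ) * B * ‖(↑p.2 : EuclideanSpace ℝ (Fin N)) - ↑q.2‖
        + Mk * Cd * |(↑p.1 : ℝ) - ↑q.1|
        ≤ ((Lk : ℝ) * B + Mk * Cd) * dist p q := by
      rw [add_mul]
      exact add_le_add (by rw [mul_assoc] at e1 ⊢; exact e1) (by rw [mul_assoc] at e2 ⊢; exact e2)
    rw [← hfi, dist_eq_norm]
    calc ‖r (X1.toBCF (KR w)) p - r (X1.toBCF (KR w)) q‖
        = ‖(KR w).app ↑p.1 p.2 - (KR w).app ↑q.1 q.2‖ := rfl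
      _ ≤ ((Lk : ℝ) * B * ‖(↑p.2 : EuclideanSpace ℝ (Fin N)) - ↑q.2‖
            + Mk * Cd * |(↑p.1 : ℝ) - ↑q.1|) * V := h2
      _ ≤ (((Lk : ℝ) * B + Mk * Cd) * dist p q) * V := mul_le_mul_of_nonneg_right e3 hV0
      _ = ((Lk : ℝ) * B + Mk * Cd) * V * dist p q := by ring
  have hAA : IsCompact (closure A₀) := by
    refine BoundedContinuousFunction.arzela_ascoli
      (Metric.closedBall (0 : Fin K → ℝ) (Mk * B * V)) (isCompact_closedBall _ _) A₀ in_s ?_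
    refine Metric.equicontinuous_of_continuity_modulus
      (fun d => ((Lk : ℝ) * B + Mk * Cd) * V * d) ?_ _ (fun p q i => hmod p q i)
    have : Filter.Tendsto (fun d : ℝ => ((Lk : ℝ) * B + Mk * Cd) * V * d)
        (nhds 0) (nhds (((Lk : ℝ) * B + Mk * Cd) * V * 0)) :=
      (continuous_const.mul continuous_id).tendsto 0
    simpa using this
  have hTBA : TotallyBounded A₀ := TotallyBounded.subset subset_closure hAA.totallyBounded
  have hle : ∀ f : BoundedContinuousFunction (ℝ × ↥(closure D)) (Fin K → ℝ),
      (∀ t x, f (t + T, x) = f (t, x)) → ‖f‖ ≤ ‖r f‖ := by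
    intro f hf
    refine (BoundedContinuousFunction.norm_le (norm_nonneg _)).2 fun p => ?_
    obtain ⟨t₀, ht₀, hval⟩ := periodic_exists_Icc hT (fun s => f (s, p.2)) (fun s => hf s p.2) p.1
    calc ‖f p‖ = ‖f (t₀, p.2)‖ := by rw [show f p = f (t₀, p.2) from hval]
      _ = ‖(r f) (⟨t₀, ht₀⟩, p.2)‖ := rfl
      _ ≤ ‖r f‖ := BoundedContinuousFunction.norm_coe_le_norm _ _
  have hdistle : ∀ a ∈ S1, ∀ b ∈ S1, dist a b ≤ dist (r a) (r b) := by
    rintro a ⟨u, -, rfl⟩ b ⟨v, -, rfl⟩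
    rw [dist_eq_norm, dist_eq_norm]
    have hsub : r (X1.toBCF u) - r (X1.toBCF v) = r (X1.toBCF u - X1.toBCF v) := by
      ext p
      simp [hrdef]
    rw [hsub]
    refine hle _ fun t x => ?_
    simp [X1.periodic u t x, X1.periodic v t x]
  have hTBS1 : TotallyBounded S1 := totallyBounded_of_image' hdistle hTBA
  have hCL : IsCompact (closure S1) :=
    TotallyBounded.isCompact_of_isClosed (totallyBounded_closure.mpr hTBS1) isClosed_closure
  have hCLsub : closure S1 ⊆ (PeriodicSubmodule N K T D : Set _) := by
    refine closure_minimal ?_ (periodicSubmodule_isClosed N K T D)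
    rintro f ⟨u, -, rfl⟩
    exact (show ↥(PeriodicSubmodule N K T D) from u).2
  have hKc : IsCompact (X1.toBCF ⁻¹' closure S1 : Set (X1 N K T D)) := by
    rw [(X1.isometry_toBCF).isEmbedding.isCompact_iff]
    rw [Set.image_preimage_eq_of_subset (by rw [X1.range_toBCF]; exact hCLsub)]
    exact hCL
  refine ⟨X1.toBCF ⁻¹' closure S1, hKc, ?_⟩
  refine Filter.mem_of_superset (Metric.ball_mem_nhds (0 : X1 N K T D) one_pos) ?_
  intro w hw
  exact subset_closure (Set.mem_image_of_mem _ (Set.mem_image_of_mem _ hw))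
end
end
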